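/- arXiv:1505.05913 — 12 statements merged into one kernel-verified Lean document; each statement's English description precedes it below -/
import Mathlib

section
/- Let r > 0 and 0 < δ < 1, and define H(u) = r·u^δ/(1+u^δ) for u ≥ 0. Then H has exactly one positive fixed point K, and for every initial condition u₀ > 0 the orbit u_{t+1} = H(u_t) converges to K as t → ∞. -/
open Filter Topology

/-- Sigmoid Beverton–Holt map with `r > 0` and `0 < δ < 1`: there is exactly one
positive fixed point `K`, and every orbit starting at `u₀ > 0` converges to `K`. -/
theorem stmt_0 (r δ : ℝ) (hr : 0 < r) (hδ0 : 0 < δ) (hδ1 : δ < 1)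
    (H : ℝ → ℝ) (hH : ∀ u : ℝ, H u = r * u ^ δ / (1 + u ^ δ)) :
    ∃ K : ℝ, 0 < K ∧ H K = K ∧
      (∀ K' : ℝ, 0 < K' → H K' = K' → K' = K) ∧
      (∀ u : ℕ → ℝ, 0 < u 0 → (∀ t : ℕ, u (t + 1) = H (u t)) →
        Filter.Tendsto u Filter.atTop (nhds K)) := by
  have hHf : H = fun u => r * u ^ δ / (1 + u ^ δ) := funext hH
  subst hHf
  set g : ℝ → ℝ := fun u => u ^ (1 - δ) + u with hgdef
  have hδ' : (0:ℝ) < 1 - δ := by linarith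
  -- basic positivity facts
  have hpow_pos : ∀ u : ℝ, 0 < u → 0 < u ^ δ := fun u hu => Real.rpow_pos_of_pos hu δ
  have hden_pos : ∀ u : ℝ, 0 < u → 0 < 1 + u ^ δ := fun u hu => by
    have := hpow_pos u hu; linarith
  -- key algebraic identity
  have key : ∀ u : ℝ, 0 < u →
      r * u ^ δ / (1 + u ^ δ) - u = u ^ δ * (r - g u) / (1 + u ^ δ) := by
    intro u hu
    have ha := hpow_pos u hu
    have hden := hden_pos u hu
    have hmul : u ^ (1 - δ) * u ^ δ = u := by
      rw [← Real.rpow_add hu]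
      norm_num
    field_simp
    simp only [hgdef]
    ring_nf
    nlinarith [hmul]
  have hgmono : StrictMonoOn g (Set.Ici (0:ℝ)) := by
    intro x hx y hy hxy
    have : x ^ (1 - δ) < y ^ (1 - δ) := Real.rpow_lt_rpow hx hxy hδ'
    simp only [hgdef]
    linarith
  have hgcont : Continuous g := by
    apply Continuous.add _ continuous_id
    rw [continuous_iff_continuousAt]
    intro x
    exact Real.continuousAt_rpow_const x (1 - δ) (Or.inr hδ'.le)
  have hg0 : g 0 = 0 := by
    simp only [hgdef]
    rw [Real.zero_rpow hδ'.ne']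
    norm_num
  have hgr : r ≤ g r := by
    have : (0:ℝ) ≤ r ^ (1 - δ) := Real.rpow_nonneg hr.le _
    simp only [hgdef]; linarith
  -- existence of K with g K = r
  obtain ⟨K, hKmem, hgK⟩ : ∃ K ∈ Set.Icc (0:ℝ) r, g K = r := by
    have := intermediate_value_Icc hr.le hgcont.continuousOn
    have hrmem : r ∈ Set.Icc (g 0) (g r) := by rw [hg0]; exact ⟨hr.le, hgr⟩
    exact this hrmem
  have hK : 0 < K := by
    rcases hKmem.1.lt_or_eq with h | h
    · exact h
    · exfalso; rw [← h, hg0] at hgK; linarith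
  have hHK : r * K ^ δ / (1 + K ^ δ) = K := by
    have := key K hK
    rw [hgK] at this
    simp at this
    linarith
  -- uniqueness
  have huniq : ∀ K' : ℝ, 0 < K' → r * K' ^ δ / (1 + K' ^ δ) = K' → K' = K := by
    intro K' hK' hfix
    have h1 := key K' hK'
    rw [hfix] at h1
    have ha := hpow_pos K' hK'
    have hden := hden_pos K' hK'
    have : r - g K' = 0 := by
      have h0 : K' ^ δ * (r - g K') / (1 + K' ^ δ) = 0 := by rw [← h1]; ring
      rcases div_eq_zero_iff.mp h0 with h | h
      · rcases mul_eq_zero.mp h with h2 | h2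
        · linarith
        · exact h2
      · exact absurd h hden.ne'
    have hgK' : g K' = r := by linarith
    exact hgmono.injOn (Set.mem_Ici.mpr hK'.le) (Set.mem_Ici.mpr hK.le) (by rw [hgK', hgK])
  -- monotonicity of H on positives
  have hHmono : ∀ x y : ℝ, 0 < x → x < y →
      r * x ^ δ / (1 + x ^ δ) < r * y ^ δ / (1 + y ^ δ) := by
    intro x y hx hxy
    have hy : 0 < y := hx.trans hxy
    have hab : x ^ δ < y ^ δ := Real.rpow_lt_rpow hx.le hxy hδ0
    have ha := hpow_pos x hx
    have hdx := hden_pos x hx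
    have hdy := hden_pos y hy
    rw [div_lt_div_iff₀ hdx hdy]
    nlinarith
  -- sign facts
  have hbelow : ∀ x : ℝ, 0 < x → x < K → x < r * x ^ δ / (1 + x ^ δ) := by
    intro x hx hxK
    have hgx : g x < r := by
      rw [← hgK]; exact hgmono (Set.mem_Ici.mpr hx.le) (Set.mem_Ici.mpr hK.le) hxK
    have := key x hx
    have ha := hpow_pos x hx
    have hden := hden_pos x hx
    nlinarith [div_pos (mul_pos ha (by linarith : (0:ℝ) < r - g x)) hden]
  have habove : ∀ x : ℝ, 0 < x → K < x → r * x ^ δ / (1 + x ^ δ) < x := by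
    intro x hx hKx
    have hgx : r < g x := by
      rw [← hgK]; exact hgmono (Set.mem_Ici.mpr hK.le) (Set.mem_Ici.mpr hx.le) hKx
    have := key x hx
    have ha := hpow_pos x hx
    have hden := hden_pos x hx
    have hneg : x ^ δ * (r - g x) / (1 + x ^ δ) < 0 :=
      div_neg_of_neg_of_pos (mul_neg_of_pos_of_neg ha (by linarith)) hden
    linarith
  -- continuity of H at positive points
  have hHcont : ∀ L : ℝ, 0 < L →
      ContinuousAt (fun u : ℝ => r * u ^ δ / (1 + u ^ δ)) L := by
    intro L hL
    have hc : ContinuousAt (fun u : ℝ => u ^ δ) L :=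
      Real.continuousAt_rpow_const L δ (Or.inl hL.ne')
    exact ((continuousAt_const.mul hc).div (continuousAt_const.add hc)
      (hden_pos L hL).ne')
  refine ⟨K, hK, hHK, huniq, ?_⟩
  intro u hu0 hrec
  rcases lt_trichotomy (u 0) K with hcase | hcase | hcase
  · -- increasing case
    have hinv : ∀ t, 0 < u t ∧ u t < K := by
      intro t
      induction t with
      | zero => exact ⟨hu0, hcase⟩
      | succ n ih =>
        constructor
        · rw [hrec n]
          exact lt_trans ih.1 (hbelow _ ih.1 ih.2)
        · rw [hrec n, ← hHK]
          exact hHmono _ _ ih.1 ih.2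
    have hmono : Monotone u := by
      apply monotone_nat_of_le_succ
      intro n
      rw [hrec n]
      exact (hbelow _ (hinv n).1 (hinv n).2).le
    have hbdd : BddAbove (Set.range u) := ⟨K, by rintro _ ⟨t, rfl⟩; exact (hinv t).2.le⟩
    have hlim := tendsto_atTop_ciSup hmono hbdd
    set L := ⨆ t, u t with hLdef
    have hLge : u 0 ≤ L := le_ciSup hbdd 0
    have hL : 0 < L := lt_of_lt_of_le hu0 hLge
    have h1 : Tendsto (fun t => u (t + 1)) atTop (𝓝 L) :=
      hlim.comp (tendsto_add_atTop_nat 1)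
    have h2 : Tendsto (fun t => r * (u t) ^ δ / (1 + (u t) ^ δ)) atTop
        (𝓝 (r * L ^ δ / (1 + L ^ δ))) := (hHcont L hL).tendsto.comp hlim
    have heq : (fun t => u (t + 1)) = fun t => r * (u t) ^ δ / (1 + (u t) ^ δ) :=
      funext fun t => hrec t
    rw [heq] at h1
    have hfix : r * L ^ δ / (1 + L ^ δ) = L := tendsto_nhds_unique h2 h1
    have : L = K := huniq L hL hfix
    rw [← this]; exact hlim
  · -- constant case
    have : ∀ t, u t = K := by
      intro t
      induction t with
      | zero => exact hcase
      | succ n ih => rw [hrec n, ih]; exact hHK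
    have : u = fun _ => K := funext this
    rw [this]; exact tendsto_const_nhds
  · -- decreasing case
    have hinv : ∀ t, K < u t := by
      intro t
      induction t with
      | zero => exact hcase
      | succ n ih =>
        rw [hrec n, ← hHK]
        exact hHmono _ _ hK ih
    have hpos : ∀ t, 0 < u t := fun t => hK.trans (hinv t)
    have hanti : Antitone u := by
      apply antitone_nat_of_succ_le
      intro n
      rw [hrec n]
      exact (habove _ (hpos n) (hinv n)).le
    have hbdd : BddBelow (Set.range u) := ⟨K, by rintro _ ⟨t, rfl⟩; exact (hinv t).le⟩
    have hlim := tendsto_atTop_ciInf hanti hbdd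
    set L := ⨅ t, u t with hLdef
    have hLge : K ≤ L := le_ciInf fun t => (hinv t).le
    have hL : 0 < L := lt_of_lt_of_le hK hLge
    have h1 : Tendsto (fun t => u (t + 1)) atTop (𝓝 L) :=
      hlim.comp (tendsto_add_atTop_nat 1)
    have h2 : Tendsto (fun t => r * (u t) ^ δ / (1 + (u t) ^ δ)) atTop
        (𝓝 (r * L ^ δ / (1 + L ^ δ))) := (hHcont L hL).tendsto.comp hlim
    have heq : (fun t => u (t + 1)) = fun t => r * (u t) ^ δ / (1 + (u t) ^ δ) :=
      funext fun t => hrec t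
    rw [heq] at h1
    have hfix : r * L ^ δ / (1 + L ^ δ) = L := tendsto_nhds_unique h2 h1
    have : L = K := huniq L hL hfix
    rw [← this]; exact hlim
end

section
/- Let δ > 1 and 0 < r < δ·(δ−1)^{(1/δ)−1}, and define H(u) = r·u^δ/(1+u^δ) for u ≥ 0. Then H(u) < u for every u > 0 (so 0 is the only fixed point of H), and for every initial condition u₀ ≥ 0 the orbit u_{t+1} = H(u_t) converges to 0 as t → ∞. -/
/-!
Dividing by `u`, `H u < u` means `r u^(δ-1) < 1 + u^δ`. Weighted AM–GM with weights `1/δ` and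
`(δ-1)/δ`, applied to `δ` and `δ u^δ / (δ-1)`, gives `r_crit u^(δ-1) ≤ 1 + u^δ` (with equality at
`u^δ = δ - 1`), so `r < r_crit` yields the strict inequality. An orbit is then nonnegative and
decreasing, and its limit is a fixed point of the continuous map `H`, hence `0`.
-/

open Real Filter Topology

theorem critical_mul_rpow_sub_one_le_one_add_rpow {δ u : ℝ} (hδ : 1 < δ) (hu : 0 ≤ u) :
    δ * (δ - 1) ^ (1 / δ - 1) * u ^ (δ - 1) ≤ 1 + u ^ δ := by
  have hδ0 : 0 < δ := by linarith
  have hδ1 : 0 < δ - 1 := by linarith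
  have amgm := geom_mean_le_arith_mean2_weighted (p₁ := δ) (p₂ := δ / (δ - 1) * u ^ δ)
    (by positivity : 0 ≤ 1 / δ) (by positivity : 0 ≤ (δ - 1) / δ) hδ0.le (by positivity)
    (by field_simp; ring)
  convert amgm using 1
  · rw [mul_rpow (by positivity) (by positivity), ← rpow_mul hu, div_rpow hδ0.le hδ1.le,
      mul_div_cancel₀ _ hδ0.ne']
    have hδ' : δ = δ ^ (1 / δ) * δ ^ ((δ - 1) / δ) := by
      rw [← rpow_add hδ0, ← add_div, add_sub_cancel, div_self hδ0.ne', rpow_one]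
    have hinv : (δ - 1) ^ (1 / δ - 1) = ((δ - 1) ^ ((δ - 1) / δ))⁻¹ := by
      rw [← rpow_neg hδ1.le]; congr 1; field_simp; ring
    nth_rw 1 [hδ', hinv]
    ring
  · field_simp

theorem tendsto_zero_of_forall_lt_self {f : ℝ → ℝ} {u : ℕ → ℝ}
    (hcont : ∀ x, 0 < x → ContinuousAt f x) (hlt : ∀ x, 0 < x → f x < x)
    (hnonneg : ∀ x, 0 ≤ x → 0 ≤ f x) (hf0 : f 0 = 0)
    (hu0 : 0 ≤ u 0) (hu : ∀ t, u (t + 1) = f (u t)) :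
    Tendsto u atTop (𝓝 0) := by
  have hu_nonneg : ∀ t, 0 ≤ u t := by
    intro t
    induction t with
    | zero => exact hu0
    | succ t ih => rw [hu]; exact hnonneg _ ih
  have hanti : Antitone u := antitone_nat_of_succ_le fun t => by
    rw [hu]
    rcases (hu_nonneg t).eq_or_lt with h | h
    · rw [← h, hf0]
    · exact (hlt _ h).le
  have hlim := tendsto_atTop_ciInf hanti ⟨0, by rintro _ ⟨t, rfl⟩; exact hu_nonneg t⟩
  rcases (le_ciInf hu_nonneg).eq_or_lt with hL | hL
  · rwa [← hL] at hlim
  refine absurd (tendsto_nhds_unique ((hcont _ hL).tendsto.comp hlim) ?_) (hlt _ hL).ne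
  simpa only [Function.comp_def, ← hu] using hlim.comp (tendsto_add_atTop_nat 1)

noncomputable def bevertonHolt (r δ u : ℝ) : ℝ := r * u ^ δ / (1 + u ^ δ)

section bevertonHolt

variable {r δ : ℝ}

theorem bevertonHolt_zero (hδ : 0 < δ) : bevertonHolt r δ 0 = 0 := by
  simp [bevertonHolt, zero_rpow hδ.ne']

theorem bevertonHolt_nonneg (hr : 0 ≤ r) {u : ℝ} (hu : 0 ≤ u) : 0 ≤ bevertonHolt r δ u := by
  have := rpow_nonneg hu δ
  unfold bevertonHolt
  positivity

theorem continuousAt_bevertonHolt {u : ℝ} (hu : 0 < u) : ContinuousAt (bevertonHolt r δ) u := by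
  have hpow : ContinuousAt (fun x : ℝ => x ^ δ) u := continuousAt_rpow_const u δ (.inl hu.ne')
  exact (continuousAt_const.mul hpow).div (continuousAt_const.add hpow) (by positivity)

theorem bevertonHolt_lt_self (hδ : 1 < δ) (hr : r < δ * (δ - 1) ^ (1 / δ - 1)) {u : ℝ}
    (hu : 0 < u) : bevertonHolt r δ u < u := by
  have hpos : 0 < 1 + u ^ δ := by positivity
  rw [bevertonHolt, div_lt_iff₀ hpos]
  calc r * u ^ δ = r * u ^ (δ - 1) * u := by
        rw [mul_assoc, ← rpow_add_one hu.ne', sub_add_cancel]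
    _ < δ * (δ - 1) ^ (1 / δ - 1) * u ^ (δ - 1) * u := by gcongr
    _ ≤ (1 + u ^ δ) * u := by gcongr; exact critical_mul_rpow_sub_one_le_one_add_rpow hδ hu.le
    _ = u * (1 + u ^ δ) := mul_comm _ _

end bevertonHolt

/-- Sigmoid Beverton–Holt map with `δ > 1` and `0 < r < δ(δ-1)^{1/δ-1}`:
`H u < u` for every `u > 0` (so `0` is the only fixed point), and every orbit
starting at `u₀ ≥ 0` converges to `0`. -/
theorem stmt_1 (r δ : ℝ) (hδ : 1 < δ) (hr0 : 0 < r)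
    (hr : r < δ * (δ - 1) ^ (1 / δ - 1))
    (H : ℝ → ℝ) (hH : ∀ u : ℝ, H u = r * u ^ δ / (1 + u ^ δ)) :
    (∀ u : ℝ, 0 < u → H u < u) ∧
    (∀ u : ℕ → ℝ, 0 ≤ u 0 → (∀ t : ℕ, u (t + 1) = H (u t)) →
      Filter.Tendsto u Filter.atTop (nhds 0)) := by
  obtain rfl : H = bevertonHolt r δ := funext hH
  have hlt : ∀ u : ℝ, 0 < u → bevertonHolt r δ u < u := fun _ => bevertonHolt_lt_self hδ hr
  exact ⟨hlt, fun u hu0 hu => tendsto_zero_of_forall_lt_self (fun _ => continuousAt_bevertonHolt)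
    hlt (fun _ => bevertonHolt_nonneg hr0.le) (bevertonHolt_zero (by linarith)) hu0 hu⟩
end

section
/- Let δ > 1 and r > δ·(δ−1)^{(1/δ)−1}, and define H(u) = r·u^δ/(1+u^δ) for u ≥ 0. Then H has exactly two positive fixed points A < K, and they satisfy 0 < A < r(δ−1)/δ < K. Moreover, for every initial condition u₀ with 0 ≤ u₀ < A the orbit u_{t+1} = H(u_t) converges to 0, and for every initial condition u₀ > A the orbit converges to K. -/
/-!
For `u > 0`, `H u - u = u / (1 + u ^ δ) * g u` with `g u = r u^(δ-1) - u^δ - 1`. The function `g`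
increases on `[0, m]` and decreases on `[m, ∞)`, where `m = r (δ-1)/δ`; moreover `g 0 = g r = -1`,
and `g m > 0` exactly when `r > r_crit`. Hence `g` has exactly two positive zeros `A < m < K`,
and `H u < u` on `(0, A) ∪ (K, ∞)`, `H u > u` on `(A, K)`. As `H` is increasing, an orbit moves
monotonically inside the interval between its starting point and the nearest fixed point in the
direction of motion, and its limit is a fixed point of that interval.
-/

open Set Filter Topology

section Orbit

variable {α : Type*} [TopologicalSpace α] {f : α → α} {u : ℕ → α}

theorem mem_and_apply_eq_of_tendsto_orbit [T2Space α] {s : Set α} {L : α} (hs : IsClosed s)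
    (hf : ContinuousOn f s) (hus : ∀ t, u t ∈ s) (hu : ∀ t, u (t + 1) = f (u t))
    (hL : Tendsto u atTop (𝓝 L)) : L ∈ s ∧ f L = L := by
  have hLs : L ∈ s := hs.mem_of_tendsto hL (Eventually.of_forall hus)
  have hfu : Tendsto (fun t ↦ f (u t)) atTop (𝓝 (f L)) :=
    (hf L hLs).tendsto.comp (tendsto_nhdsWithin_iff.mpr ⟨hL, Eventually.of_forall hus⟩)
  refine ⟨hLs, tendsto_nhds_unique hfu ?_⟩
  simpa only [hu] using (tendsto_add_atTop_iff_nat 1).mpr hL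

variable [ConditionallyCompleteLinearOrder α] [OrderTopology α] {a b : α}

theorem tendsto_orbit_left_of_lt_self (hf : ContinuousOn f (Icc a b)) (hmono : MonotoneOn f (Icc a b))
    (hfa : f a = a) (hlt : ∀ x ∈ Ioc a b, f x < x) (hu0 : u 0 ∈ Icc a b)
    (hu : ∀ t, u (t + 1) = f (u t)) : Tendsto u atTop (𝓝 a) := by
  have hle : ∀ x ∈ Icc a b, f x ≤ x := fun x hx ↦
    hx.1.eq_or_lt.elim (fun h ↦ h ▸ hfa.le) fun h ↦ (hlt x ⟨h, hx.2⟩).le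
  have hmaps : MapsTo f (Icc a b) (Icc a b) := fun x hx ↦
    ⟨hfa ▸ hmono (left_mem_Icc.mpr (hx.1.trans hx.2)) hx hx.1, (hle x hx).trans hx.2⟩
  have hus : ∀ t, u t ∈ Icc a b := fun t ↦ by
    induction t with
    | zero => exact hu0
    | succ t ih => exact hu t ▸ hmaps ih
  have hanti : Antitone u := antitone_nat_of_succ_le fun t ↦ hu t ▸ hle _ (hus t)
  have hL := tendsto_atTop_ciInf hanti ⟨a, forall_mem_range.mpr fun t ↦ (hus t).1⟩
  obtain ⟨hLs, hLfix⟩ := mem_and_apply_eq_of_tendsto_orbit isClosed_Icc hf hus hu hL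
  obtain h | h := hLs.1.eq_or_lt
  · exact h ▸ hL
  · exact absurd hLfix (hlt _ ⟨h, hLs.2⟩).ne

theorem tendsto_orbit_right_of_self_lt (hf : ContinuousOn f (Icc a b)) (hmono : MonotoneOn f (Icc a b))
    (hfb : f b = b) (hlt : ∀ x ∈ Ico a b, x < f x) (hu0 : u 0 ∈ Icc a b)
    (hu : ∀ t, u (t + 1) = f (u t)) : Tendsto u atTop (𝓝 b) := by
  refine tendsto_orbit_left_of_lt_self (α := αᵒᵈ) (a := OrderDual.toDual b) (b := OrderDual.toDual a)
    (f := OrderDual.toDual ∘ f ∘ OrderDual.ofDual) (u := OrderDual.toDual ∘ u) ?_ ?_ hfb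
    (fun x hx ↦ hlt x ⟨hx.2, hx.1⟩) ⟨hu0.2, hu0.1⟩ hu
  · rw [Icc_toDual]; exact hf
  · rw [Icc_toDual]; exact hmono.dual

end Orbit

noncomputable section

namespace BevertonHolt

def map (r δ u : ℝ) : ℝ := r * u ^ δ / (1 + u ^ δ)

/-- `map r δ u - u` has the sign of `gap r δ u` for `u > 0`, see `map_sub_self`. -/
def gap (r δ u : ℝ) : ℝ := r * u ^ (δ - 1) - u ^ δ - 1

def critRate (δ : ℝ) : ℝ := δ * (δ - 1) ^ (1 / δ - 1)

variable {r δ u : ℝ}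

theorem one_add_rpow_pos (hu : 0 ≤ u) : 0 < 1 + u ^ δ := by
  have := Real.rpow_nonneg hu δ
  positivity

theorem map_zero (hδ : δ ≠ 0) : map r δ 0 = 0 := by
  simp [map, Real.zero_rpow hδ]

theorem strictMonoOn_map (hr : 0 < r) (hδ : 0 < δ) : StrictMonoOn (map r δ) (Ici 0) := by
  intro a ha b hb hab
  have hpow : a ^ δ < b ^ δ := Real.rpow_lt_rpow ha hab hδ
  have ha' : 0 ≤ a ^ δ := Real.rpow_nonneg ha δ
  simp only [map]
  rw [div_lt_div_iff₀ (by positivity) (by linarith)]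
  nlinarith

theorem continuousOn_map (hδ : 0 ≤ δ) : ContinuousOn (map r δ) (Ici 0) := by
  have hpow := Real.continuous_rpow_const hδ
  exact (continuous_const.mul hpow).continuousOn.div (continuous_const.add hpow).continuousOn
    fun u hu ↦ (one_add_rpow_pos hu).ne'

theorem map_sub_self (hu : 0 < u) : map r δ u - u = u / (1 + u ^ δ) * gap r δ u := by
  have hmul : u * u ^ (δ - 1) = u ^ δ := by
    rw [Real.rpow_sub_one hu.ne', mul_div_cancel₀ _ hu.ne']
  have := one_add_rpow_pos (δ := δ) hu.le
  simp only [map, gap, ← hmul]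
  field_simp
  ring

theorem map_lt_self_iff (hu : 0 < u) : map r δ u < u ↔ gap r δ u < 0 := by
  have hc : 0 < u / (1 + u ^ δ) := div_pos hu (one_add_rpow_pos hu.le)
  rw [← sub_neg, map_sub_self hu]
  exact ⟨fun h ↦ neg_of_mul_neg_right h hc.le, mul_neg_of_pos_of_neg hc⟩

theorem lt_map_self_iff (hu : 0 < u) : u < map r δ u ↔ 0 < gap r δ u := by
  have hc : 0 < u / (1 + u ^ δ) := div_pos hu (one_add_rpow_pos hu.le)
  rw [← sub_pos, map_sub_self hu, mul_pos_iff_of_pos_left hc]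

theorem map_eq_self_iff (hu : 0 < u) : map r δ u = u ↔ gap r δ u = 0 := by
  have hc : 0 < u / (1 + u ^ δ) := div_pos hu (one_add_rpow_pos hu.le)
  rw [← sub_eq_zero, map_sub_self hu, mul_eq_zero_iff_left hc.ne']

theorem continuous_gap (hδ : 1 ≤ δ) : Continuous (gap r δ) :=
  ((continuous_const.mul (Real.continuous_rpow_const (by linarith))).sub
    (Real.continuous_rpow_const (by linarith))).sub continuous_const

theorem hasDerivAt_gap (hδ : δ ≠ 0) (hu : 0 < u) :
    HasDerivAt (gap r δ) (δ * u ^ (δ - 2) * (r * (δ - 1) / δ - u)) u := by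
  have h := (((Real.hasDerivAt_rpow_const (p := δ - 1) (Or.inl hu.ne')).const_mul r).sub
    (Real.hasDerivAt_rpow_const (p := δ) (Or.inl hu.ne'))).sub_const 1
  have hpow : u ^ (δ - 1) = u ^ (δ - 2) * u := by
    rw [show δ - 1 = δ - 2 + 1 by ring, Real.rpow_add_one hu.ne']
  refine h.congr_deriv ?_
  rw [show δ - 1 - 1 = δ - 2 by ring, hpow]
  field_simp

theorem strictMonoOn_gap (hδ : 1 ≤ δ) : StrictMonoOn (gap r δ) (Icc 0 (r * (δ - 1) / δ)) := by
  refine strictMonoOn_of_deriv_pos (convex_Icc _ _) (continuous_gap hδ).continuousOn ?_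
  intro x hx
  rw [interior_Icc] at hx
  rw [(hasDerivAt_gap (by linarith) hx.1).deriv]
  have := Real.rpow_pos_of_pos hx.1 (δ - 2)
  have := sub_pos.mpr hx.2
  positivity

theorem strictAntiOn_gap (hr : 0 ≤ r) (hδ : 1 ≤ δ) :
    StrictAntiOn (gap r δ) (Ici (r * (δ - 1) / δ)) := by
  refine strictAntiOn_of_deriv_neg (convex_Ici _) (continuous_gap hδ).continuousOn ?_
  intro x hx
  rw [interior_Ici] at hx
  have hx0 : 0 < x := (div_nonneg (mul_nonneg hr (by linarith)) (by linarith)).trans_lt hx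
  rw [(hasDerivAt_gap (by linarith) hx0).deriv]
  exact mul_neg_of_pos_of_neg (by have := Real.rpow_pos_of_pos hx0 (δ - 2); positivity)
    (sub_neg.mpr hx)

theorem gap_zero (hδ : 1 < δ) : gap r δ 0 = -1 := by
  simp [gap, Real.zero_rpow (by linarith : δ - 1 ≠ 0), Real.zero_rpow (by linarith : δ ≠ 0)]

theorem gap_self (hr : 0 < r) : gap r δ r = -1 := by
  rw [gap, Real.rpow_sub_one hr.ne', mul_div_cancel₀ _ hr.ne']
  ring

theorem critRate_pos (hδ : 1 < δ) : 0 < critRate δ :=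
  mul_pos (by linarith) (Real.rpow_pos_of_pos (by linarith) _)

/-- At `m = r (δ-1)/δ` one has `gap r δ m = m ^ δ / (δ-1) - 1`, and `critRate δ < r` says exactly
that `m > (δ-1) ^ (1/δ)`. -/
theorem gap_pos (hδ : 1 < δ) (hr : critRate δ < r) : 0 < gap r δ (r * (δ - 1) / δ) := by
  set m := r * (δ - 1) / δ with hm
  have hδ1 : 0 < δ - 1 := by linarith
  have hcrit : critRate δ * (δ - 1) / δ = (δ - 1) ^ (1 / δ) := by
    rw [critRate, Real.rpow_sub_one hδ1.ne']
    field_simp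
  have hm_gt : (δ - 1) ^ (1 / δ) < m := by
    rw [← hcrit, hm]
    gcongr
  have hm0 : 0 < m := (Real.rpow_pos_of_pos hδ1 _).trans hm_gt
  have hgap : gap r δ m = m ^ δ / (δ - 1) - 1 := by
    have hr : r = δ * m / (δ - 1) := by rw [hm]; field_simp
    rw [gap, Real.rpow_sub_one hm0.ne', hr]
    field_simp
    ring
  have hpow : δ - 1 < m ^ δ := by
    calc δ - 1 = ((δ - 1) ^ (1 / δ)) ^ δ := by
          rw [one_div, Real.rpow_inv_rpow hδ1.le (by linarith)]
      _ < m ^ δ := Real.rpow_lt_rpow (Real.rpow_nonneg hδ1.le _) hm_gt (by linarith)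
  rw [hgap, sub_pos, one_lt_div hδ1]
  exact hpow

theorem exists_fixedPoints (hδ : 1 < δ) (hr : critRate δ < r) :
    ∃ A K, 0 < A ∧ A < r * (δ - 1) / δ ∧ r * (δ - 1) / δ < K ∧ map r δ A = A ∧ map r δ K = K ∧
      (∀ u ∈ Ioo 0 A, map r δ u < u) ∧ (∀ u ∈ Ioo A K, u < map r δ u) ∧
      (∀ u ∈ Ioi K, map r δ u < u) := by
  set m := r * (δ - 1) / δ with hm
  have hr0 : 0 < r := (critRate_pos hδ).trans hr
  have hm0 : 0 < m := div_pos (mul_pos hr0 (by linarith)) (by linarith)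
  have hmr : m < r := by rw [hm, div_lt_iff₀ (by linarith)]; nlinarith
  have hgm := gap_pos hδ hr
  have hmono := strictMonoOn_gap (r := r) hδ.le
  have hanti := strictAntiOn_gap hr0.le hδ.le
  obtain ⟨A, ⟨hA0, hAm⟩, hgA⟩ : ∃ A ∈ Ioo 0 m, gap r δ A = 0 :=
    intermediate_value_Ioo hm0.le (continuous_gap hδ.le).continuousOn
      ⟨by rw [gap_zero hδ]; norm_num, hgm⟩
  obtain ⟨K, ⟨hmK, -⟩, hgK⟩ : ∃ K ∈ Ioo m r, gap r δ K = 0 :=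
    intermediate_value_Ioo' hmr.le (continuous_gap hδ.le).continuousOn
      ⟨by rw [gap_self hr0]; norm_num, hgm⟩
  have hK0 := hm0.trans hmK
  refine ⟨A, K, hA0, hAm, hmK, (map_eq_self_iff hA0).mpr hgA, (map_eq_self_iff hK0).mpr hgK,
    fun u hu ↦ ?_, fun u hu ↦ ?_, fun u hu ↦ ?_⟩
  · refine (map_lt_self_iff hu.1).mpr (hgA ▸ hmono ⟨hu.1.le, ?_⟩ ⟨hA0.le, hAm.le⟩ hu.2)
    linarith [hu.2]
  · have hu0 := hA0.trans hu.1
    refine (lt_map_self_iff hu0).mpr ?_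
    rcases le_or_gt u m with h | h
    · exact hgA ▸ hmono ⟨hA0.le, hAm.le⟩ ⟨hu0.le, h⟩ hu.1
    · exact hgK ▸ hanti (mem_Ici.mpr h.le) (mem_Ici.mpr hmK.le) hu.2
  · exact (map_lt_self_iff (hK0.trans hu)).mpr
      (hgK ▸ hanti (mem_Ici.mpr hmK.le) (mem_Ici.mpr (hmK.trans hu).le) hu)

end BevertonHolt

end

open BevertonHolt

/-- Sigmoid Beverton–Holt map with `δ > 1` and `r > δ(δ-1)^{1/δ-1}`: exactly two
positive fixed points `A < K` with `0 < A < r(δ-1)/δ < K`; orbits starting in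
`[0, A)` converge to `0`, orbits starting above `A` converge to `K`. -/
theorem stmt_2 (r δ : ℝ) (hδ : 1 < δ) (hr : r > δ * (δ - 1) ^ (1 / δ - 1))
    (H : ℝ → ℝ) (hH : ∀ u : ℝ, H u = r * u ^ δ / (1 + u ^ δ)) :
    ∃ A K : ℝ, 0 < A ∧ A < r * (δ - 1) / δ ∧ r * (δ - 1) / δ < K ∧
      H A = A ∧ H K = K ∧
      (∀ u : ℝ, 0 < u → H u = u → u = A ∨ u = K) ∧
      (∀ u : ℕ → ℝ, 0 ≤ u 0 → u 0 < A → (∀ t : ℕ, u (t + 1) = H (u t)) →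
        Filter.Tendsto u Filter.atTop (nhds 0)) ∧
      (∀ u : ℕ → ℝ, A < u 0 → (∀ t : ℕ, u (t + 1) = H (u t)) →
        Filter.Tendsto u Filter.atTop (nhds K)) := by
  obtain rfl : H = map r δ := funext hH
  obtain ⟨A, K, hA0, hAm, hmK, hA, hK, below, between, above⟩ := exists_fixedPoints hδ hr
  have hK0 : 0 < K := by linarith
  have hIcc {a b : ℝ} (ha : 0 ≤ a) :
      ContinuousOn (map r δ) (Icc a b) ∧ MonotoneOn (map r δ) (Icc a b) := by
    have hsub : Icc a b ⊆ Ici 0 := Icc_subset_Ici_self.trans (Ici_subset_Ici.mpr ha)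
    exact ⟨(continuousOn_map (by linarith)).mono hsub,
      (strictMonoOn_map ((critRate_pos hδ).trans hr) (by linarith)).monotoneOn.mono hsub⟩
  refine ⟨A, K, hA0, hAm, hmK, hA, hK, fun u hu hfix ↦ ?_, fun u hu0 huA hu ↦ ?_,
    fun u hAu hu ↦ ?_⟩
  · rcases lt_trichotomy u A with h | rfl | h
    · exact absurd hfix (below u ⟨hu, h⟩).ne
    · exact Or.inl rfl
    rcases lt_trichotomy u K with h' | rfl | h'
    · exact absurd hfix (between u ⟨h, h'⟩).ne'
    · exact Or.inr rfl
    · exact absurd hfix (above u h').ne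
  · exact tendsto_orbit_left_of_lt_self (hIcc le_rfl).1 (hIcc le_rfl).2 (map_zero (by linarith))
      (fun x hx ↦ below x ⟨hx.1, hx.2.trans_lt huA⟩) ⟨hu0, le_rfl⟩ hu
  rcases le_or_gt (u 0) K with h | h
  · have hu0 : 0 ≤ u 0 := by linarith
    exact tendsto_orbit_right_of_self_lt (hIcc hu0).1 (hIcc hu0).2 hK
      (fun x hx ↦ between x ⟨hAu.trans_le hx.1, hx.2⟩) ⟨le_rfl, h⟩ hu
  · exact tendsto_orbit_left_of_lt_self (hIcc hK0.le).1 (hIcc hK0.le).2 hK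
      (fun x hx ↦ above x hx.1) ⟨h.le, le_rfl⟩ hu
end

section
/- Let a > 1, δ > 1 and r > a^{1/δ}·δ·(δ−1)^{(1/δ)−1}, and define H_a(u) = r·u^δ/(a+u^δ) and H(u) = r·u^δ/(1+u^δ) for u ≥ 0. Then H_a has exactly two positive fixed points A^a < K^a and H has exactly two positive fixed points A < K, and these satisfy 0 < A < A^a < K^a < K. -/
/-!
For `u > 0` and `b ≥ 0`, `r u^δ / (b + u^δ) = u` is equivalent to `g(u) = b`, where
`g(u) = r u^(δ-1) - u^δ = u^(δ-1) (r - u)` is `fixedLevel r δ`. For `δ > 1`, `g` vanishes at `0`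
and at `r`, increases strictly on `[0, c]` and decreases strictly on `[c, ∞)`, where
`c = r(δ-1)/δ`; its maximum is `g(c) = (r/δ)^δ (δ-1)^(δ-1)`, and `r` exceeds the critical growth
rate of `H_b` exactly when `b < g(c)`. So for such `r` each level `b ∈ (0, g(c))` is attained
exactly once on each side of `c`. Applying this to the levels `1 < a`, the monotonicity of `g` on
either side of `c` puts the two roots for `a` strictly between the two roots for `1`.
-/

open Real Set

namespace SigmoidBevertonHolt

variable {r δ b u : ℝ}

noncomputable def fixedLevel (r δ u : ℝ) : ℝ := r * u ^ (δ - 1) - u ^ δ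

lemma fixedLevel_eq_mul (hu : u ≠ 0) : fixedLevel r δ u = u ^ (δ - 1) * (r - u) := by
  rw [fixedLevel, mul_sub, mul_comm, ← rpow_add_one hu, sub_add_cancel]

lemma div_add_rpow_eq_self_iff (hb : 0 ≤ b) (hu : 0 < u) :
    r * u ^ δ / (b + u ^ δ) = u ↔ fixedLevel r δ u = b := by
  have hpow : u ^ δ = u ^ (δ - 1) * u := by rw [← rpow_add_one hu.ne', sub_add_cancel]
  rw [div_eq_iff (by positivity), fixedLevel, hpow]
  constructor
  · intro h
    exact mul_right_cancel₀ hu.ne' (by linear_combination h)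
  · intro h
    linear_combination u * h

lemma continuous_fixedLevel (hδ : 1 ≤ δ) : Continuous (fixedLevel r δ) := by
  unfold fixedLevel
  fun_prop (disch := linarith)

lemma hasDerivAt_fixedLevel (hu : u ≠ 0) :
    HasDerivAt (fixedLevel r δ) (u ^ (δ - 2) * (r * (δ - 1) - δ * u)) u := by
  refine (((hasDerivAt_rpow_const (p := δ - 1) (Or.inl hu)).const_mul r).sub
    (hasDerivAt_rpow_const (p := δ) (Or.inl hu))).congr_deriv ?_
  rw [show δ - 1 = δ - 2 + 1 by ring, rpow_add_one hu, show δ - 2 + 1 - 1 = δ - 2 by ring]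
  ring

lemma strictMonoOn_fixedLevel (hδ : 1 ≤ δ) :
    StrictMonoOn (fixedLevel r δ) (Icc 0 (r * (δ - 1) / δ)) := by
  refine strictMonoOn_of_deriv_pos (convex_Icc _ _) (continuous_fixedLevel hδ).continuousOn ?_
  intro u hu
  rw [interior_Icc] at hu
  obtain ⟨hu0, huc⟩ := hu
  rw [(hasDerivAt_fixedLevel hu0.ne').deriv]
  rw [lt_div_iff₀ (by linarith)] at huc
  exact mul_pos (rpow_pos_of_pos hu0 _) (by linarith)

lemma strictAntiOn_fixedLevel (hr : 0 ≤ r) (hδ : 1 ≤ δ) :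
    StrictAntiOn (fixedLevel r δ) (Ici (r * (δ - 1) / δ)) := by
  refine strictAntiOn_of_deriv_neg (convex_Ici _) (continuous_fixedLevel hδ).continuousOn ?_
  intro u hu
  rw [interior_Ici, mem_Ioi] at hu
  have hu0 : 0 < u := lt_of_le_of_lt (div_nonneg (by nlinarith) (by linarith)) hu
  rw [(hasDerivAt_fixedLevel hu0.ne').deriv]
  have hδu : r * (δ - 1) < δ * u := by
    rw [div_lt_iff₀ (by linarith)] at hu
    linarith
  exact mul_neg_of_pos_of_neg (rpow_pos_of_pos hu0 _) (by linarith)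

lemma fixedLevel_zero (hδ : 1 < δ) : fixedLevel r δ 0 = 0 := by
  simp [fixedLevel, zero_rpow (sub_ne_zero.2 hδ.ne'), zero_rpow (by linarith : δ ≠ 0)]

lemma fixedLevel_critical (hr : 0 < r) (hδ : 1 < δ) :
    fixedLevel r δ (r * (δ - 1) / δ) = (r / δ) ^ δ * (δ - 1) ^ (δ - 1) := by
  have hδ0 : 0 < δ := by linarith
  have hc : r * (δ - 1) / δ = r / δ * (δ - 1) := by ring
  have hrδ : r - r / δ * (δ - 1) = r / δ := by field_simp; ring
  rw [hc, fixedLevel_eq_mul (mul_pos (div_pos hr hδ0) (by linarith)).ne', hrδ,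
    mul_rpow (by positivity) (by linarith), mul_right_comm, ← rpow_add_one (by positivity),
    sub_add_cancel]

lemma lt_critical_value (hb : 0 ≤ b) (hδ : 1 < δ)
    (hr : b ^ (1 / δ) * δ * (δ - 1) ^ (1 / δ - 1) < r) :
    b < (r / δ) ^ δ * (δ - 1) ^ (δ - 1) := by
  have hδ0 : 0 < δ := by linarith
  have hδ1 : 0 < δ - 1 := by linarith
  have hr0 : 0 < r := lt_of_le_of_lt (by positivity) hr
  have hroot : b ^ (1 / δ) < r / δ * (δ - 1) ^ (1 - 1 / δ) := by
    have hinv : (δ - 1) ^ (1 / δ - 1) * (δ - 1) ^ (1 - 1 / δ) = 1 := by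
      rw [← rpow_add hδ1]; norm_num
    rw [div_mul_eq_mul_div, lt_div_iff₀ hδ0]
    calc b ^ (1 / δ) * δ
        = b ^ (1 / δ) * δ * (δ - 1) ^ (1 / δ - 1) * (δ - 1) ^ (1 - 1 / δ) := by
          rw [mul_assoc _ ((δ - 1) ^ (1 / δ - 1)), hinv, mul_one]
      _ < r * (δ - 1) ^ (1 - 1 / δ) := by gcongr
  calc b = (b ^ (1 / δ)) ^ δ := by rw [← rpow_mul hb, one_div_mul_cancel hδ0.ne', rpow_one]
    _ < (r / δ * (δ - 1) ^ (1 - 1 / δ)) ^ δ := by gcongr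
    _ = (r / δ) ^ δ * (δ - 1) ^ (δ - 1) := by
      rw [mul_rpow (by positivity) (by positivity), ← rpow_mul hδ1.le]
      congr 2
      field_simp

lemma exists_fixedLevel_eq_iff (hr : 0 < r) (hδ : 1 < δ) (hb : 0 < b)
    (hbc : b < fixedLevel r δ (r * (δ - 1) / δ)) :
    ∃ A K, 0 < A ∧ A < r * (δ - 1) / δ ∧ r * (δ - 1) / δ < K ∧
      ∀ u, 0 < u → (fixedLevel r δ u = b ↔ u = A ∨ u = K) := by
  set c := r * (δ - 1) / δ
  have hc0 : 0 < c := div_pos (mul_pos hr (by linarith)) (by linarith)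
  have hcr : c < r := by rw [div_lt_iff₀ (by linarith)]; nlinarith
  have hcont : ∀ s, ContinuousOn (fixedLevel r δ) s :=
    fun _ => (continuous_fixedLevel hδ.le).continuousOn
  obtain ⟨A, hA, hgA⟩ : b ∈ fixedLevel r δ '' Ioo 0 c :=
    intermediate_value_Ioo hc0.le (hcont _) ⟨(fixedLevel_zero hδ).symm ▸ hb, hbc⟩
  have hgr : fixedLevel r δ r = 0 := by rw [fixedLevel_eq_mul hr.ne', sub_self, mul_zero]
  obtain ⟨K, hK, hgK⟩ : b ∈ fixedLevel r δ '' Ioo c r :=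
    intermediate_value_Ioo' hcr.le (hcont _) ⟨hgr.symm ▸ hb, hbc⟩
  refine ⟨A, K, hA.1, hA.2, hK.1, fun u hu => ⟨fun hgu => ?_, ?_⟩⟩
  · rcases le_or_gt u c with huc | huc
    · exact .inl <| (strictMonoOn_fixedLevel hδ.le).injOn ⟨hu.le, huc⟩ ⟨hA.1.le, hA.2.le⟩
        (hgu.trans hgA.symm)
    · exact .inr <| (strictAntiOn_fixedLevel hr.le hδ.le).injOn huc.le hK.1.le
        (hgu.trans hgK.symm)
  · rintro (rfl | rfl) <;> assumption

end SigmoidBevertonHolt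

open SigmoidBevertonHolt in
/-- Generalized sigmoid Beverton–Holt maps `H_a(u) = r u^δ/(a+u^δ)` and
`H(u) = r u^δ/(1+u^δ)` with `a > 1`, `δ > 1`, `r > a^{1/δ} δ (δ-1)^{1/δ-1}`:
each has exactly two positive fixed points, interlaced as `0 < A < A^a < K^a < K`. -/
theorem stmt_3 (r a δ : ℝ) (ha : 1 < a) (hδ : 1 < δ)
    (hr : r > a ^ (1 / δ) * δ * (δ - 1) ^ (1 / δ - 1))
    (Ha H : ℝ → ℝ)
    (hHa : ∀ u : ℝ, Ha u = r * u ^ δ / (a + u ^ δ))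
    (hH : ∀ u : ℝ, H u = r * u ^ δ / (1 + u ^ δ)) :
    ∃ A Aa Ka K : ℝ, 0 < A ∧ A < Aa ∧ Aa < Ka ∧ Ka < K ∧
      Ha Aa = Aa ∧ Ha Ka = Ka ∧ H A = A ∧ H K = K ∧
      (∀ u : ℝ, 0 < u → Ha u = u → u = Aa ∨ u = Ka) ∧
      (∀ u : ℝ, 0 < u → H u = u → u = A ∨ u = K) := by
  have ha0 : 0 < a := by linarith
  have hr0 : 0 < r := lt_of_le_of_lt (by positivity) hr
  have hac : a < fixedLevel r δ (r * (δ - 1) / δ) :=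
    (fixedLevel_critical hr0 hδ).symm ▸ lt_critical_value ha0.le hδ hr
  obtain ⟨A, K, hA, hAc, hcK, hlevel1⟩ := exists_fixedLevel_eq_iff hr0 hδ one_pos (ha.trans hac)
  obtain ⟨Aa, Ka, hAa, hAac, hcKa, hlevela⟩ := exists_fixedLevel_eq_iff hr0 hδ ha0 hac
  have hAAa : A < Aa := by
    refine ((strictMonoOn_fixedLevel hδ.le).lt_iff_lt ⟨hA.le, hAc.le⟩ ⟨hAa.le, hAac.le⟩).1 ?_
    rwa [(hlevel1 A hA).2 (.inl rfl), (hlevela Aa hAa).2 (.inl rfl)]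
  have hK := hA.trans (hAc.trans hcK)
  have hKa := hAa.trans (hAac.trans hcKa)
  have hKaK : Ka < K := by
    refine ((strictAntiOn_fixedLevel hr0.le hδ.le).lt_iff_gt hcK.le hcKa.le).1 ?_
    rwa [(hlevel1 K hK).2 (.inr rfl), (hlevela Ka hKa).2 (.inr rfl)]
  have hfixH : ∀ u, 0 < u → (H u = u ↔ u = A ∨ u = K) := fun u hu => by
    rw [hH, div_add_rpow_eq_self_iff zero_le_one hu, hlevel1 u hu]
  have hfixHa : ∀ u, 0 < u → (Ha u = u ↔ u = Aa ∨ u = Ka) := fun u hu => by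
    rw [hHa, div_add_rpow_eq_self_iff ha0.le hu, hlevela u hu]
  refine ⟨A, Aa, Ka, K, hA, hAAa, hAac.trans hcKa, hKaK, (hfixHa _ hAa).2 (.inl rfl),
    (hfixHa _ hKa).2 (.inr rfl), (hfixH _ hA).2 (.inl rfl),
    (hfixH _ hK).2 (.inr rfl), fun u hu => (hfixHa u hu).1,
    fun u hu => (hfixH u hu).1⟩
end

section
/- Let r > 0, b > 0, d > 0 and 0 < δ < 1, and define H(u) = r·u^δ/(1+u^δ+b·u^d) for u ≥ 0. Then H has exactly one positive fixed point K. If in addition δ > d, then for every initial condition u₀ > 0 the orbit u_{t+1} = H(u_t) converges to K as t → ∞. -/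
open Real Filter Set

/-- Generalized Maynard Smith–Slatkin map with `0 < δ < 1`: there is exactly one
positive fixed point `K`, and if moreover `δ > d`, every orbit starting at
`u₀ > 0` converges to `K`. -/
theorem stmt_4 (r b d δ : ℝ) (hr : 0 < r) (hb : 0 < b) (hd : 0 < d)
    (hδ0 : 0 < δ) (hδ1 : δ < 1)
    (H : ℝ → ℝ)
    (hH : ∀ u : ℝ, H u = r * u ^ δ / (1 + u ^ δ + b * u ^ d)) :
    ∃ K : ℝ, 0 < K ∧ H K = K ∧
      (∀ K' : ℝ, 0 < K' → H K' = K' → K' = K) ∧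
      (d < δ → ∀ u : ℕ → ℝ, 0 < u 0 → (∀ t : ℕ, u (t + 1) = H (u t)) →
        Filter.Tendsto u Filter.atTop (nhds K)) := by
  set g : ℝ → ℝ := fun u => u ^ (1 - δ) + u + b * u ^ (1 + d - δ) with hgdef
  have hDpos : ∀ u : ℝ, 0 < u → 0 < 1 + u ^ δ + b * u ^ d := by
    intro u hu
    have h1 := Real.rpow_pos_of_pos hu δ
    have h2 := Real.rpow_pos_of_pos hu d
    positivity
  have hgpos : ∀ u : ℝ, 0 < u → 0 < g u := by
    intro u hu
    have h1 := Real.rpow_pos_of_pos hu (1 - δ)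
    have h2 := Real.rpow_pos_of_pos hu (1 + d - δ)
    simp only [hgdef]
    positivity
  -- g u = u^(1-δ) * (1 + u^δ + b u^d)
  have hgfact : ∀ u : ℝ, 0 < u → g u = u ^ (1 - δ) * (1 + u ^ δ + b * u ^ d) := by
    intro u hu
    simp only [hgdef]
    rw [mul_add, mul_add, mul_one, ← Real.rpow_add hu]
    have e1 : (1 : ℝ) - δ + δ = 1 := by ring
    rw [e1, Real.rpow_one]
    have e2 : u ^ (1 - δ) * (b * u ^ d) = b * (u ^ (1 - δ) * u ^ d) := by ring
    rw [e2, ← Real.rpow_add hu]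
    ring_nf
  -- H u = r * u / g u for u > 0
  have hHg : ∀ u : ℝ, 0 < u → H u = r * u / g u := by
    intro u hu
    rw [hH, hgfact u hu]
    have hD := hDpos u hu
    have hp := Real.rpow_pos_of_pos hu (1 - δ)
    rw [div_eq_div_iff hD.ne' (by positivity)]
    have : u ^ δ * u ^ (1 - δ) = u := by
      rw [← Real.rpow_add hu]; norm_num
    linear_combination r * (1 + u ^ δ + b * u ^ d) * this
  have hgmono : StrictMonoOn g (Set.Ioi (0 : ℝ)) := by
    intro x hx y hy hxy
    simp only [hgdef]
    have h1 : x ^ (1 - δ) < y ^ (1 - δ) :=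
      Real.rpow_lt_rpow (le_of_lt hx) hxy (by linarith)
    have h2 : x ^ (1 + d - δ) < y ^ (1 + d - δ) :=
      Real.rpow_lt_rpow (le_of_lt hx) hxy (by linarith)
    nlinarith
  -- existence of positive root of g = r
  have hgcont : ∀ x : ℝ, 0 < x → ContinuousAt g x := by
    intro x hx
    have h1 : ContinuousAt (fun u : ℝ => u ^ (1 - δ)) x :=
      Real.continuousAt_rpow_const x _ (Or.inl hx.ne')
    have h2 : ContinuousAt (fun u : ℝ => u ^ (1 + d - δ)) x :=
      Real.continuousAt_rpow_const x _ (Or.inl hx.ne')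
    exact (h1.add continuousAt_id).add (continuousAt_const.mul h2)
  have hg0 : Filter.Tendsto g (nhds 0) (nhds 0) := by
    have h1 : ContinuousAt (fun u : ℝ => u ^ (1 - δ)) 0 :=
      Real.continuousAt_rpow_const 0 _ (Or.inr (by linarith))
    have h2 : ContinuousAt (fun u : ℝ => u ^ (1 + d - δ)) 0 :=
      Real.continuousAt_rpow_const 0 _ (Or.inr (by linarith))
    have hc : ContinuousAt g 0 := (h1.add continuousAt_id).add (continuousAt_const.mul h2)
    have hg00 : g 0 = 0 := by
      simp only [hgdef]
      rw [Real.zero_rpow (by linarith : (1 : ℝ) - δ ≠ 0),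
        Real.zero_rpow (by linarith : (1 : ℝ) + d - δ ≠ 0)]
      ring
    simpa [hg00] using hc.tendsto
  obtain ⟨ε, hε, hεr⟩ : ∃ ε : ℝ, 0 < ε ∧ ∀ x : ℝ, |x - 0| < ε → g x < r := by
    have := hg0.eventually_lt_const hr
    rcases Metric.eventually_nhds_iff.mp this with ⟨ε, hε, h⟩
    exact ⟨ε, hε, fun x hx => h (by simpa [Real.dist_eq] using hx)⟩
  set x₀ : ℝ := min (ε / 2) r with hx₀def
  have hx₀pos : 0 < x₀ := lt_min (by linarith) hr
  have hx₀r : x₀ ≤ r := min_le_right _ _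
  have hgx₀ : g x₀ < r := by
    apply hεr
    rw [sub_zero, abs_of_pos hx₀pos]
    calc x₀ ≤ ε / 2 := min_le_left _ _
      _ < ε := by linarith
  have hgr : r ≤ g r := by
    have h1 := Real.rpow_pos_of_pos hr (1 - δ)
    have h2 := Real.rpow_pos_of_pos hr (1 + d - δ)
    simp only [hgdef]
    nlinarith
  have hcontIcc : ContinuousOn g (Set.Icc x₀ r) := by
    intro x hx
    exact (hgcont x (lt_of_lt_of_le hx₀pos hx.1)).continuousWithinAt
  obtain ⟨K, hKmem, hgK⟩ : ∃ K ∈ Set.Icc x₀ r, g K = r := by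
    have := intermediate_value_Icc hx₀r hcontIcc
    have hrmem : r ∈ Set.Icc (g x₀) (g r) := ⟨le_of_lt hgx₀, hgr⟩
    obtain ⟨K, hK, hgK⟩ := this hrmem
    exact ⟨K, hK, hgK⟩
  have hK0 : 0 < K := lt_of_lt_of_le hx₀pos hKmem.1
  -- fixed point characterization
  have hfix_iff : ∀ u : ℝ, 0 < u → (H u = u ↔ g u = r) := by
    intro u hu
    rw [hHg u hu]
    have hgu := hgpos u hu
    rw [div_eq_iff hgu.ne']
    constructor
    · intro h
      have := mul_right_cancel₀ hu.ne' (by linarith [h] : r * u = g u * u)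
      linarith
    · intro h; rw [h]; ring
  have hHK : H K = K := (hfix_iff K hK0).mpr hgK
  have huniq : ∀ K' : ℝ, 0 < K' → H K' = K' → K' = K := by
    intro K' hK' hfix
    have hgK' : g K' = r := (hfix_iff K' hK').mp hfix
    exact hgmono.injOn hK' hK0 (by rw [hgK', hgK])
  refine ⟨K, hK0, hHK, huniq, ?_⟩
  -- convergence part
  intro hdδ u hu0 hrec
  -- H is positive and monotone on positives
  have hHpos : ∀ x : ℝ, 0 < x → 0 < H x := by
    intro x hx
    rw [hHg x hx]
    exact div_pos (by positivity) (hgpos x hx)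
  set φ : ℝ → ℝ := fun u => u ^ (-δ) + 1 + b * u ^ (d - δ) with hφdef
  have hφpos : ∀ x : ℝ, 0 < x → 0 < φ x := by
    intro x hx
    have h1 := Real.rpow_pos_of_pos hx (-δ)
    have h2 := Real.rpow_pos_of_pos hx (d - δ)
    simp only [hφdef]; positivity
  have hHφ : ∀ x : ℝ, 0 < x → H x = r / φ x := by
    intro x hx
    have hφf : φ x = x ^ (-δ) * (1 + x ^ δ + b * x ^ d) := by
      simp only [hφdef]
      have e1 : x ^ (-δ) * x ^ δ = 1 := by rw [← Real.rpow_add hx]; norm_num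
      have e2 : x ^ (-δ) * x ^ d = x ^ (d - δ) := by
        rw [← Real.rpow_add hx]; ring_nf
      rw [mul_add, mul_add, mul_one, e1,
        show x ^ (-δ) * (b * x ^ d) = b * (x ^ (-δ) * x ^ d) by ring, e2]
    rw [hH, hφf]
    have hD := hDpos x hx
    have hp := Real.rpow_pos_of_pos hx (-δ)
    rw [div_eq_div_iff hD.ne' (by positivity)]
    have : x ^ δ * x ^ (-δ) = 1 := by
      rw [← Real.rpow_add hx]; norm_num
    linear_combination r * (1 + x ^ δ + b * x ^ d) * this
  have hφanti : ∀ x y : ℝ, 0 < x → x ≤ y → φ y ≤ φ x := by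
    intro x y hx hxy
    have h1 : y ^ (-δ) ≤ x ^ (-δ) :=
      Real.rpow_le_rpow_of_nonpos hx hxy (by linarith)
    have h2 : y ^ (d - δ) ≤ x ^ (d - δ) :=
      Real.rpow_le_rpow_of_nonpos hx hxy (by linarith)
    simp only [hφdef]
    nlinarith
  have hHmono : ∀ x y : ℝ, 0 < x → x ≤ y → H x ≤ H y := by
    intro x y hx hxy
    have hy : 0 < y := lt_of_lt_of_le hx hxy
    rw [hHφ x hx, hHφ y hy]
    exact div_le_div_of_nonneg_left hr.le (hφpos y hy) (hφanti x y hx hxy)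
  -- H u ≥ u for u ≤ K, H u ≤ u for u ≥ K
  have hgK' : ∀ x : ℝ, 0 < x → x ≤ K → g x ≤ r := by
    intro x hx hxK
    rcases eq_or_lt_of_le hxK with h | h
    · rw [h, hgK]
    · exact le_of_lt (by rw [← hgK]; exact hgmono hx hK0 h)
  have hgK'' : ∀ x : ℝ, K ≤ x → r ≤ g x := by
    intro x hxK
    rcases eq_or_lt_of_le hxK with h | h
    · rw [← h, hgK]
    · exact le_of_lt (by rw [← hgK]; exact hgmono hK0 (hK0.trans h) h)
  have hHge : ∀ x : ℝ, 0 < x → x ≤ K → x ≤ H x := by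
    intro x hx hxK
    rw [hHg x hx, le_div_iff₀ (hgpos x hx)]
    have := hgK' x hx hxK
    nlinarith
  have hHle : ∀ x : ℝ, K ≤ x → H x ≤ x := by
    intro x hxK
    have hx : 0 < x := lt_of_lt_of_le hK0 hxK
    rw [hHg x hx, div_le_iff₀ (hgpos x hx)]
    have := hgK'' x hxK
    nlinarith
  -- positivity of the orbit
  have hupos : ∀ t : ℕ, 0 < u t := by
    intro t
    induction t with
    | zero => exact hu0
    | succ n ih => rw [hrec n]; exact hHpos _ ih
  -- continuity of H at positive points
  have hHcont : ∀ x : ℝ, 0 < x → ContinuousAt H x := by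
    intro x hx
    have hHfun : H = fun v : ℝ => r * v ^ δ / (1 + v ^ δ + b * v ^ d) := funext hH
    rw [hHfun]
    have h1 : ContinuousAt (fun v : ℝ => v ^ δ) x :=
      Real.continuousAt_rpow_const x _ (Or.inl hx.ne')
    have h2 : ContinuousAt (fun v : ℝ => v ^ d) x :=
      Real.continuousAt_rpow_const x _ (Or.inl hx.ne')
    exact (continuousAt_const.mul h1).div
      ((continuousAt_const.add h1).add (continuousAt_const.mul h2)) (hDpos x hx).ne'
  -- limit of the orbit is a fixed point
  have key : ∀ L : ℝ, 0 < L → Filter.Tendsto u Filter.atTop (nhds L) → L = K := by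
    intro L hL hlim
    have hlim' : Filter.Tendsto (fun t => u (t + 1)) Filter.atTop (nhds L) :=
      hlim.comp (tendsto_add_atTop_nat 1)
    have hlim'' : Filter.Tendsto (fun t => H (u t)) Filter.atTop (nhds (H L)) :=
      ((hHcont L hL).tendsto).comp hlim
    have heq : (fun t => u (t + 1)) = fun t => H (u t) := funext hrec
    rw [heq] at hlim'
    exact huniq L hL (tendsto_nhds_unique hlim'' hlim')
  rcases le_total (u 0) K with hcase | hcase
  · -- increasing case
    have hle : ∀ t : ℕ, u t ≤ K := by
      intro t
      induction t with
      | zero => exact hcase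
      | succ n ih =>
        rw [hrec n]
        calc H (u n) ≤ H K := hHmono _ _ (hupos n) ih
          _ = K := hHK
    have hmono : Monotone u := by
      apply monotone_nat_of_le_succ
      intro n
      rw [hrec n]
      exact hHge _ (hupos n) (hle n)
    have hbdd : BddAbove (Set.range u) := ⟨K, by rintro x ⟨t, rfl⟩; exact hle t⟩
    have hlim := tendsto_atTop_ciSup hmono hbdd
    have hLpos : 0 < ⨆ t, u t := lt_of_lt_of_le hu0 (le_ciSup hbdd 0)
    have := key _ hLpos hlim
    rwa [this] at hlim
  · -- decreasing case
    have hge : ∀ t : ℕ, K ≤ u t := by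
      intro t
      induction t with
      | zero => exact hcase
      | succ n ih =>
        rw [hrec n]
        calc K = H K := hHK.symm
          _ ≤ H (u n) := hHmono _ _ hK0 ih
    have hanti : Antitone u := by
      apply antitone_nat_of_succ_le
      intro n
      rw [hrec n]
      exact hHle _ (hge n)
    have hbdd : BddBelow (Set.range u) := ⟨K, by rintro x ⟨t, rfl⟩; exact hge t⟩
    have hlim := tendsto_atTop_ciInf hanti hbdd
    have hLpos : 0 < ⨅ t, u t := lt_of_lt_of_le hK0 (le_ciInf hge)
    have := key _ hLpos hlim
    rwa [this] at hlim
end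

section
/- Let b > 0 and 1 < δ < d, and let r > r_crit where r_crit = (δ/(b(d−δ)))^{(1−δ)/d}·[ d/(d−δ) + (δ/(b(d−δ)))^{δ/d} ]. Define H(u) = r·u^δ/(1+u^δ+b·u^d) for u ≥ 0. Then H has at least two distinct positive fixed points A < K, and they satisfy A < u_c < K, where u_c = (δ/(b(d−δ)))^{1/d} is the unique positive critical point of H. -/
lemma rpow_cont (p : ℝ) (hp : 0 < p) : Continuous (fun u : ℝ => u ^ p) :=
  continuous_iff_continuousAt.mpr fun x => Real.continuousAt_rpow_const x p (Or.inr hp.le)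

/-- Generalized Maynard Smith–Slatkin map with `1 < δ < d` and `r > r_crit`:
there are at least two distinct positive fixed points `A < K` straddling the
critical point `u_c = (δ/(b(d-δ)))^{1/d}`. -/
theorem stmt_5 (r b d δ : ℝ) (hb : 0 < b) (hδ : 1 < δ) (hδd : δ < d)
    (hr : r > (δ / (b * (d - δ))) ^ ((1 - δ) / d) *
      (d / (d - δ) + (δ / (b * (d - δ))) ^ (δ / d)))
    (H : ℝ → ℝ)
    (hH : ∀ u : ℝ, H u = r * u ^ δ / (1 + u ^ δ + b * u ^ d)) :
    ∃ A K : ℝ, 0 < A ∧ A < (δ / (b * (d - δ))) ^ (1 / d) ∧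
      (δ / (b * (d - δ))) ^ (1 / d) < K ∧ H A = A ∧ H K = K := by
  have hd0 : 0 < d := lt_trans (lt_trans one_pos hδ) hδd
  have hdδ : 0 < d - δ := sub_pos.mpr hδd
  have hδ0 : 0 < δ := lt_trans one_pos hδ
  set c : ℝ := δ / (b * (d - δ)) with hc_def
  have hc : 0 < c := div_pos hδ0 (mul_pos hb hdδ)
  set uc : ℝ := c ^ (1 / d) with huc_def
  have huc : 0 < uc := Real.rpow_pos_of_pos hc _
  -- key powers of uc
  have hpow : ∀ p : ℝ, uc ^ p = c ^ (p / d) := by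
    intro p
    rw [huc_def, ← Real.rpow_mul hc.le]
    ring_nf
  have hucd : uc ^ d = c := by
    rw [hpow, div_self hd0.ne']
    exact Real.rpow_one c
  -- the function g
  set g : ℝ → ℝ := fun u => r * u ^ (δ - 1) - (1 + u ^ δ + b * u ^ d) with hg_def
  have hg_cont : Continuous g := by
    apply Continuous.sub
    · exact continuous_const.mul (rpow_cont _ (by linarith))
    · exact (continuous_const.add (rpow_cont _ hδ0)).add
        (continuous_const.mul (rpow_cont _ hd0))
  -- g 0 = -1
  have hg0 : g 0 = -1 := by
    simp only [hg_def]
    rw [Real.zero_rpow (by linarith : δ - 1 ≠ 0), Real.zero_rpow hδ0.ne',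
      Real.zero_rpow hd0.ne']
    ring
  -- g uc > 0
  have hguc : 0 < g uc := by
    have h1 : r * uc ^ (δ - 1) > d / (d - δ) + c ^ (δ / d) := by
      have hmul := (mul_lt_mul_of_pos_right hr
        (Real.rpow_pos_of_pos hc ((δ - 1) / d)))
      have hcomb : c ^ ((1 - δ) / d) * c ^ ((δ - 1) / d) = 1 := by
        rw [← Real.rpow_add hc, show (1 - δ) / d + (δ - 1) / d = 0 by ring,
          Real.rpow_zero]
      calc d / (d - δ) + c ^ (δ / d)
          = (c ^ ((1 - δ) / d) * (d / (d - δ) + c ^ (δ / d))) * c ^ ((δ - 1) / d) := by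
            rw [mul_comm (c ^ ((1 - δ) / d)), mul_assoc, hcomb, mul_one]
        _ < r * c ^ ((δ - 1) / d) := hmul
        _ = r * uc ^ (δ - 1) := by rw [hpow]
    have h2 : 1 + uc ^ δ + b * uc ^ d = d / (d - δ) + c ^ (δ / d) := by
      rw [hucd, hpow]
      have : b * c = δ / (d - δ) := by
        rw [hc_def]; field_simp
      rw [this]
      field_simp
      ring
    show 0 < r * uc ^ (δ - 1) - (1 + uc ^ δ + b * uc ^ d)
    rw [h2]
    linarith
  -- fixed point from zero of g
  have hfix : ∀ u : ℝ, 0 < u → g u = 0 → H u = u := by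
    intro u hu hgu
    have hgu' : r * u ^ (δ - 1) - (1 + u ^ δ + b * u ^ d) = 0 := hgu
    have hD : (1 : ℝ) + u ^ δ + b * u ^ d = r * u ^ (δ - 1) := by linarith
    have hDpos : (0 : ℝ) < 1 + u ^ δ + b * u ^ d := by
      have := Real.rpow_nonneg hu.le δ
      have := Real.rpow_nonneg hu.le d
      nlinarith
    have husplit : u ^ δ = u ^ (δ - 1) * u := by
      rw [← Real.rpow_add_one hu.ne' (δ - 1)]
      norm_num
    have hrpos : 0 < r * u ^ (δ - 1) := hD ▸ hDpos
    rw [hH u, hD, husplit, div_eq_iff hrpos.ne']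
    ring
  -- find A in (0, uc)
  obtain ⟨A, hA_mem, hA_zero⟩ : ∃ A ∈ Set.Ioo (0 : ℝ) uc, g A = 0 := by
    have h0 : (0 : ℝ) ∈ Set.Ioo (g 0) (g uc) := by
      constructor
      · rw [hg0]; norm_num
      · exact hguc
    obtain ⟨A, hA, hgA⟩ := intermediate_value_Ioo huc.le hg_cont.continuousOn h0
    exact ⟨A, hA, hgA⟩
  -- find K in (uc, M)
  set M : ℝ := max (max r 1) uc + 1 with hM_def
  have hM_uc : uc < M := lt_of_le_of_lt (le_max_right _ _) (by linarith [le_refl M])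
  have hM_pos : 0 < M :=
    lt_of_le_of_lt (le_trans zero_le_one (le_trans (le_max_right r 1) (le_max_left _ _)))
      (by linarith)
  have hM_r : r ≤ M :=
    le_trans (le_trans (le_max_left r 1) (le_max_left _ _)) (by linarith)
  have hgM : g M < 0 := by
    have h1 : r * M ^ (δ - 1) ≤ M ^ δ := by
      have : M ^ δ = M * M ^ (δ - 1) := by
        have h := Real.rpow_add_one hM_pos.ne' (δ - 1)
        rw [show δ - 1 + 1 = δ by ring] at h
        rw [h]; ring
      rw [this]
      exact mul_le_mul_of_nonneg_right hM_r (Real.rpow_nonneg hM_pos.le _)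
    have h2 : 0 < b * M ^ d := mul_pos hb (Real.rpow_pos_of_pos hM_pos d)
    show r * M ^ (δ - 1) - (1 + M ^ δ + b * M ^ d) < 0
    linarith
  obtain ⟨K, hK_mem, hK_zero⟩ : ∃ K ∈ Set.Ioo uc M, g K = 0 := by
    have h0 : (0 : ℝ) ∈ Set.Ioo (g M) (g uc) := ⟨hgM, hguc⟩
    obtain ⟨K, hK, hgK⟩ := intermediate_value_Ioo' hM_uc.le hg_cont.continuousOn h0
    exact ⟨K, hK, hgK⟩
  refine ⟨A, K, hA_mem.1, hA_mem.2, hK_mem.1, ?_, ?_⟩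
  · exact hfix A hA_mem.1 hA_zero
  · exact hfix K (lt_trans huc hK_mem.1) hK_zero
end

section
/- Let r₁, r₂, b₁, b₂, δ₁, δ₂, δ₃, δ₄ be positive reals with δ₁δ₂ ≥ δ₃δ₄, and let T be the competition map T(x,y) = (r₁x^{δ₁}/(1+x^{δ₁}+b₁y^{δ₃}), r₂y^{δ₂}/(1+y^{δ₂}+b₂x^{δ₄})). Then T restricted to the open positive quadrant (0,∞)² is injective. -/
/-!
Each component of `T` is `r X / (1 + X + c)`, so `T p = T q` says exactly that the two quantities
`(1 + b₁ y^δ₃) / x^δ₁` and `(1 + b₂ x^δ₄) / y^δ₂` agree at `p = (x, y)` and `q = (x', y')`.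
Put `s = x'/x` and `u = y'/y`. If `s < 1`, the first equality forces `u^δ₃ < s^δ₁`, hence `u < 1`,
and then the second forces `s^δ₄ < u^δ₂`. Chaining, `s^(δ₃δ₄) < u^(δ₂δ₃) < s^(δ₁δ₂)`, which
contradicts `s < 1` and `δ₃δ₄ ≤ δ₁δ₂`. The same argument, with the roles of the species exchanged
when needed, rules out `s > 1`, `u < 1` and `u > 1`.
-/

open Real

lemma one_add_div_eq_of_mul_div_eq {r X X' c c' : ℝ} (hr : r ≠ 0) (hX : 0 < X) (hX' : 0 < X')
    (hc : 0 ≤ c) (hc' : 0 ≤ c') (h : r * X / (1 + X + c) = r * X' / (1 + X' + c')) :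
    (1 + c) / X = (1 + c') / X' := by
  rw [div_eq_div_iff (by positivity) (by positivity)] at h
  rw [div_eq_div_iff hX.ne' hX'.ne']
  have h' : X * (1 + X' + c') = X' * (1 + X + c) :=
    mul_left_cancel₀ hr (by linear_combination h)
  linear_combination -h'

lemma rpow_le_of_rpow_lt_of_lt_one {s u α β γ δ : ℝ} (hs₀ : 0 < s) (hs₁ : s < 1) (hu : 0 ≤ u)
    (hβ : 0 < β) (hγ : 0 < γ) (hexp : γ * δ ≤ α * β) (h : u ^ γ < s ^ α) :
    u ^ β ≤ s ^ δ := by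
  by_contra! h'
  have : s ^ (δ * γ) < s ^ (α * β) :=
    calc s ^ (δ * γ) = (s ^ δ) ^ γ := rpow_mul hs₀.le δ γ
      _ < (u ^ β) ^ γ := rpow_lt_rpow (by positivity) h' hγ
      _ = (u ^ γ) ^ β := by rw [← rpow_mul hu, ← rpow_mul hu, mul_comm]
      _ < (s ^ α) ^ β := rpow_lt_rpow (by positivity) h hβ
      _ = s ^ (α * β) := (rpow_mul hs₀.le α β).symm
  exact this.not_ge (rpow_le_rpow_of_exponent_ge hs₀ hs₁.le (by linarith [mul_comm γ δ]))

namespace BevertonHolt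

variable {a b α β γ δ x y x' y' : ℝ}

lemma div_rpow_lt_div_rpow_of_lt (ha : 0 < a) (hα : 0 < α) (hx' : 0 < x') (hy : 0 < y)
    (hy' : 0 < y') (h : (1 + a * y ^ γ) / x ^ α = (1 + a * y' ^ γ) / x' ^ α) (hlt : x' < x) :
    (y' / y) ^ γ < (x' / x) ^ α := by
  have hx : 0 < x := hx'.trans hlt
  have hX : x' ^ α < x ^ α := rpow_lt_rpow hx'.le hlt hα
  have hX' : 0 < x' ^ α := by positivity
  have hY : 0 < y ^ γ := by positivity
  rw [div_rpow hy'.le hy.le, div_rpow hx'.le hx.le, div_lt_div_iff₀ hY (by positivity)]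
  rw [div_eq_div_iff (by positivity) hX'.ne'] at h
  -- `h` rearranges to `a (y'^γ x^α - y^γ x'^α) = x'^α - x^α < 0`
  nlinarith

theorem le_of_div_eq_of_div_eq (ha : 0 < a) (hb : 0 < b) (hα : 0 < α) (hβ : 0 < β) (hγ : 0 < γ)
    (hexp : γ * δ ≤ α * β) (hx' : 0 < x') (hy : 0 < y) (hy' : 0 < y')
    (hP : (1 + a * y ^ γ) / x ^ α = (1 + a * y' ^ γ) / x' ^ α)
    (hQ : (1 + b * x ^ δ) / y ^ β = (1 + b * x' ^ δ) / y' ^ β) : x ≤ x' := by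
  by_contra! hlt
  have hx : 0 < x := hx'.trans hlt
  have hu : (y' / y) ^ γ < (x' / x) ^ α := div_rpow_lt_div_rpow_of_lt ha hα hx' hy hy' hP hlt
  have hyy : y' < y := by
    have hs : (x' / x) ^ α < 1 := rpow_lt_one (by positivity) ((div_lt_one hx).2 hlt) hα
    rw [← div_lt_one hy, ← rpow_lt_one_iff' (by positivity) hγ]
    exact hu.trans hs
  have hv : (x' / x) ^ δ < (y' / y) ^ β := div_rpow_lt_div_rpow_of_lt hb hβ hy' hx hx' hQ hyy
  exact hv.not_ge <| rpow_le_of_rpow_lt_of_lt_one (by positivity) ((div_lt_one hx).2 hlt)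
    (by positivity) hβ hγ hexp hu

end BevertonHolt

/-- If `δ₁δ₂ ≥ δ₃δ₄`, the competition map `T` is injective on the open
positive quadrant. -/
theorem stmt_10 (r₁ r₂ b₁ b₂ δ₁ δ₂ δ₃ δ₄ : ℝ)
    (hr₁ : 0 < r₁) (hr₂ : 0 < r₂) (hb₁ : 0 < b₁) (hb₂ : 0 < b₂)
    (hδ₁ : 0 < δ₁) (hδ₂ : 0 < δ₂) (hδ₃ : 0 < δ₃) (hδ₄ : 0 < δ₄)
    (hδ : δ₁ * δ₂ ≥ δ₃ * δ₄)
    (T : ℝ × ℝ → ℝ × ℝ)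
    (hT : ∀ x y : ℝ, T (x, y) =
      (r₁ * x ^ δ₁ / (1 + x ^ δ₁ + b₁ * y ^ δ₃),
       r₂ * y ^ δ₂ / (1 + y ^ δ₂ + b₂ * x ^ δ₄))) :
    Set.InjOn T {p : ℝ × ℝ | 0 < p.1 ∧ 0 < p.2} := by
  rintro ⟨x, y⟩ ⟨hx, hy⟩ ⟨x', y'⟩ ⟨hx', hy'⟩ h
  rw [hT, hT, Prod.mk.injEq] at h
  have hP := one_add_div_eq_of_mul_div_eq hr₁.ne' (rpow_pos_of_pos hx δ₁)
    (rpow_pos_of_pos hx' δ₁) (by positivity) (by positivity) h.1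
  have hQ := one_add_div_eq_of_mul_div_eq hr₂.ne' (rpow_pos_of_pos hy δ₂)
    (rpow_pos_of_pos hy' δ₂) (by positivity) (by positivity) h.2
  have hδ' : δ₄ * δ₃ ≤ δ₂ * δ₁ := by linarith [mul_comm δ₃ δ₄, mul_comm δ₁ δ₂]
  refine Prod.ext (le_antisymm ?_ ?_) (le_antisymm ?_ ?_)
  · exact BevertonHolt.le_of_div_eq_of_div_eq hb₁ hb₂ hδ₁ hδ₂ hδ₃ hδ hx' hy hy' hP hQ
  · exact BevertonHolt.le_of_div_eq_of_div_eq hb₁ hb₂ hδ₁ hδ₂ hδ₃ hδ hx hy' hy hP.symm hQ.symm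
  · exact BevertonHolt.le_of_div_eq_of_div_eq hb₂ hb₁ hδ₂ hδ₁ hδ₄ hδ' hy' hx hx' hQ hP
  · exact BevertonHolt.le_of_div_eq_of_div_eq hb₂ hb₁ hδ₂ hδ₁ hδ₄ hδ' hy hx' hx hQ.symm hP.symm
end

section
/- Let r₁, r₂, b₁, b₂, δ₁, δ₂, δ₃, δ₄ be positive reals with δ₁δ₂ ≥ δ₃δ₄, and let T be the competition map T(x,y) = (r₁x^{δ₁}/(1+x^{δ₁}+b₁y^{δ₃}), r₂y^{δ₂}/(1+y^{δ₂}+b₂x^{δ₄})). Then for every initial condition (x₀,y₀) ∈ [0,∞)² the orbit (x_{t+1},y_{t+1}) = T(x_t,y_t) converges, as t → ∞, to some fixed point of T (which lies in [0,r₁]×[0,r₂]). -/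
open Filter Topology

private lemma evMonoTendsto (f : ℕ → ℝ) (t₀ : ℕ) (h : ∀ s, t₀ ≤ s → f s ≤ f (s + 1))
    (B : ℝ) (hB : ∀ t, f t ≤ B) : ∃ L, Tendsto f atTop (𝓝 L) := by
  have hg : Monotone fun t => f (t + t₀) := monotone_nat_of_le_succ fun n => by
    have h' := h (n + t₀) (Nat.le_add_left _ _)
    have e : n + 1 + t₀ = n + t₀ + 1 := by omega
    simpa [e] using h'
  have hbdd : BddAbove (Set.range fun t => f (t + t₀)) := by
    refine ⟨B, ?_⟩; rintro z ⟨n, rfl⟩; exact hB _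
  exact ⟨_, (tendsto_add_atTop_iff_nat t₀).mp (tendsto_atTop_ciSup hg hbdd)⟩

private lemma evAntiTendsto (f : ℕ → ℝ) (t₀ : ℕ) (h : ∀ s, t₀ ≤ s → f (s + 1) ≤ f s)
    (B : ℝ) (hB : ∀ t, B ≤ f t) : ∃ L, Tendsto f atTop (𝓝 L) := by
  obtain ⟨L, hL⟩ := evMonoTendsto (fun t => -f t) t₀ (fun s hs => neg_le_neg (h s hs))
    (-B) (fun t => neg_le_neg (hB t))
  exact ⟨-L, by simpa using hL.neg⟩

private lemma bhMono (r b d e : ℝ) (hr : 0 < r) (hb : 0 < b) (hd : 0 < d) (he : 0 < e)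
    {x x' y y' : ℝ} (hx : 0 ≤ x) (hxx : x ≤ x') (hy' : 0 ≤ y') (hyy : y' ≤ y) :
    r * x ^ d / (1 + x ^ d + b * y ^ e) ≤ r * x' ^ d / (1 + x' ^ d + b * y' ^ e) := by
  have hu : x ^ d ≤ x' ^ d := Real.rpow_le_rpow hx hxx hd.le
  have hv : y' ^ e ≤ y ^ e := Real.rpow_le_rpow hy' hyy he.le
  have hu0 : 0 ≤ x ^ d := Real.rpow_nonneg hx d
  have hv0 : 0 ≤ y' ^ e := Real.rpow_nonneg hy' e
  have hD : 0 < 1 + x ^ d + b * y ^ e := by nlinarith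
  have hD' : 0 < 1 + x' ^ d + b * y' ^ e := by nlinarith
  rw [div_le_div_iff₀ hD hD']
  nlinarith [mul_le_mul hu hv hv0 (hu0.trans hu), hr.le, hb.le,
    mul_le_mul_of_nonneg_left (mul_le_mul hu hv hv0 (hu0.trans hu)) (mul_nonneg hr.le hb.le)]

private lemma ratioContra {a c δ₁ δ₂ δ₃ δ₄ : ℝ} (ha : 1 < a) (hc : 1 < c)
    (h1 : 0 < δ₁) (h4 : 0 < δ₄) (hδ : δ₃ * δ₄ ≤ δ₁ * δ₂)
    (hac : a ^ δ₁ < c ^ δ₃) (hca : c ^ δ₂ < a ^ δ₄) : False := by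
  have ha0 : (0:ℝ) ≤ a := by linarith
  have hc0 : (0:ℝ) ≤ c := by linarith
  have e1 : a ^ (δ₁ * δ₄) < c ^ (δ₃ * δ₄) := by
    rw [Real.rpow_mul ha0, Real.rpow_mul hc0]
    exact Real.rpow_lt_rpow (Real.rpow_nonneg ha0 _) hac h4
  have e2 : c ^ (δ₃ * δ₄) ≤ c ^ (δ₁ * δ₂) := Real.rpow_le_rpow_of_exponent_le hc.le hδ
  have e3 : c ^ (δ₁ * δ₂) < a ^ (δ₁ * δ₄) := by
    have h : c ^ (δ₂ * δ₁) < a ^ (δ₄ * δ₁) := by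
      rw [Real.rpow_mul hc0, Real.rpow_mul ha0]
      exact Real.rpow_lt_rpow (Real.rpow_nonneg hc0 _) hca h1
    rwa [mul_comm δ₂ δ₁, mul_comm δ₄ δ₁] at h
  linarith

private lemma crossLt {b d e : ℝ} (hb : 0 < b) (hd : 0 < d) (he : 0 < e)
    {x x' y y' : ℝ} (hx' : 0 ≤ x') (hy : 0 ≤ y) (hy' : 0 ≤ y') (hlt : x' < x)
    (P : x ^ d + b * (x ^ d * y' ^ e) ≤ x' ^ d + b * (x' ^ d * y ^ e)) :
    0 < x' ∧ 0 < y ∧ y' < y ∧ x ^ d * y' ^ e < x' ^ d * y ^ e := by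
  have hx : 0 ≤ x := hx'.trans hlt.le
  have hu' : x' ^ d < x ^ d := Real.rpow_lt_rpow hx' hlt hd
  have hu0 : 0 < x ^ d := (Real.rpow_nonneg hx' d).trans_lt hu'
  have hv0 : 0 ≤ y ^ e := Real.rpow_nonneg hy e
  have hv'0 : 0 ≤ y' ^ e := Real.rpow_nonneg hy' e
  have key : x ^ d * y' ^ e < x' ^ d * y ^ e := by nlinarith
  have hprod : 0 < x' ^ d * y ^ e := (mul_nonneg hu0.le hv'0).trans_lt key
  have hxd' : 0 < x' ^ d := by nlinarith
  have hyd : 0 < y ^ e := by nlinarith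
  have hx'p : 0 < x' := by
    rcases hx'.lt_or_eq with h | h
    · exact h
    · exfalso; rw [← h, Real.zero_rpow hd.ne'] at hxd'; exact lt_irrefl 0 hxd'
  have hyp : 0 < y := by
    rcases hy.lt_or_eq with h | h
    · exact h
    · exfalso; rw [← h, Real.zero_rpow he.ne'] at hyd; exact lt_irrefl 0 hyd
  have hve : y' ^ e < y ^ e := by nlinarith
  have hylt : y' < y := by
    by_contra hcon
    push_neg at hcon
    exact absurd (Real.rpow_le_rpow hy hcon he.le) (not_le.mpr hve)
  exact ⟨hx'p, hyp, hylt, key⟩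

private lemma bhReflect (r₁ r₂ b₁ b₂ δ₁ δ₂ δ₃ δ₄ : ℝ)
    (hr₁ : 0 < r₁) (hr₂ : 0 < r₂) (hb₁ : 0 < b₁) (hb₂ : 0 < b₂)
    (hδ₁ : 0 < δ₁) (hδ₂ : 0 < δ₂) (hδ₃ : 0 < δ₃) (hδ₄ : 0 < δ₄)
    (hδ : δ₃ * δ₄ ≤ δ₁ * δ₂)
    {x y x' y' : ℝ} (hx : 0 ≤ x) (hy : 0 ≤ y) (hx' : 0 ≤ x') (hy' : 0 ≤ y')
    (h1 : r₁ * x ^ δ₁ / (1 + x ^ δ₁ + b₁ * y ^ δ₃) ≤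
          r₁ * x' ^ δ₁ / (1 + x' ^ δ₁ + b₁ * y' ^ δ₃))
    (h2 : r₂ * y ^ δ₂ / (1 + y ^ δ₂ + b₂ * x ^ δ₄) ≤
          r₂ * y' ^ δ₂ / (1 + y' ^ δ₂ + b₂ * x' ^ δ₄)) :
    x ≤ x' ∧ y ≤ y' := by
  have hu0 : 0 ≤ x ^ δ₁ := Real.rpow_nonneg hx _
  have hu'0 : 0 ≤ x' ^ δ₁ := Real.rpow_nonneg hx' _
  have hv0 : 0 ≤ y ^ δ₃ := Real.rpow_nonneg hy _
  have hv'0 : 0 ≤ y' ^ δ₃ := Real.rpow_nonneg hy' _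
  have hw0 : 0 ≤ y ^ δ₂ := Real.rpow_nonneg hy _
  have hw'0 : 0 ≤ y' ^ δ₂ := Real.rpow_nonneg hy' _
  have hz0 : 0 ≤ x ^ δ₄ := Real.rpow_nonneg hx _
  have hz'0 : 0 ≤ x' ^ δ₄ := Real.rpow_nonneg hx' _
  have hD1 : 0 < 1 + x ^ δ₁ + b₁ * y ^ δ₃ := by nlinarith
  have hD1' : 0 < 1 + x' ^ δ₁ + b₁ * y' ^ δ₃ := by nlinarith
  have hD2 : 0 < 1 + y ^ δ₂ + b₂ * x ^ δ₄ := by nlinarith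
  have hD2' : 0 < 1 + y' ^ δ₂ + b₂ * x' ^ δ₄ := by nlinarith
  rw [div_le_div_iff₀ hD1 hD1'] at h1
  rw [div_le_div_iff₀ hD2 hD2'] at h2
  have P1 : x ^ δ₁ + b₁ * (x ^ δ₁ * y' ^ δ₃) ≤ x' ^ δ₁ + b₁ * (x' ^ δ₁ * y ^ δ₃) := by
    have P1' : r₁ * (x ^ δ₁ + b₁ * (x ^ δ₁ * y' ^ δ₃)) ≤
        r₁ * (x' ^ δ₁ + b₁ * (x' ^ δ₁ * y ^ δ₃)) := by linarith [h1]
    exact le_of_mul_le_mul_left P1' hr₁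
  have P2 : y ^ δ₂ + b₂ * (y ^ δ₂ * x' ^ δ₄) ≤ y' ^ δ₂ + b₂ * (y' ^ δ₂ * x ^ δ₄) := by
    have P2' : r₂ * (y ^ δ₂ + b₂ * (y ^ δ₂ * x' ^ δ₄)) ≤
        r₂ * (y' ^ δ₂ + b₂ * (y' ^ δ₂ * x ^ δ₄)) := by linarith [h2]
    exact le_of_mul_le_mul_left P2' hr₂
  have hxx : x ≤ x' := by
    by_contra hcon
    push_neg at hcon
    obtain ⟨hx'p, hyp, hylt, key1⟩ := crossLt hb₁ hδ₁ hδ₃ hx' hy hy' hcon P1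
    obtain ⟨hy'p, hxp, _, key2⟩ := crossLt hb₂ hδ₂ hδ₄ hy' hx hx' hylt P2
    have ha : 1 < x / x' := (one_lt_div hx'p).mpr hcon
    have hc : 1 < y / y' := (one_lt_div hy'p).mpr hylt
    have hac : (x / x') ^ δ₁ < (y / y') ^ δ₃ := by
      rw [Real.div_rpow hx hx'p.le, Real.div_rpow hy hy'p.le,
        div_lt_div_iff₀ (Real.rpow_pos_of_pos hx'p _) (Real.rpow_pos_of_pos hy'p _)]
      linarith [key1]
    have hca : (y / y') ^ δ₂ < (x / x') ^ δ₄ := by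
      rw [Real.div_rpow hy hy'p.le, Real.div_rpow hx hx'p.le,
        div_lt_div_iff₀ (Real.rpow_pos_of_pos hy'p _) (Real.rpow_pos_of_pos hx'p _)]
      linarith [key2]
    exact ratioContra ha hc hδ₁ hδ₄ hδ hac hca
  have hyy : y ≤ y' := by
    by_contra hcon
    push_neg at hcon
    obtain ⟨_, _, hxlt, _⟩ := crossLt hb₂ hδ₂ hδ₄ hy' hx hx' hcon P2
    exact absurd hxx (not_le.mpr hxlt)
  exact ⟨hxx, hyy⟩
/-- If `δ₁δ₂ ≥ δ₃δ₄`, every orbit of the competition map `T` starting in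
`[0,∞)²` converges to a fixed point of `T` lying in `[0,r₁] × [0,r₂]`. -/
theorem stmt_11 (r₁ r₂ b₁ b₂ δ₁ δ₂ δ₃ δ₄ : ℝ)
    (hr₁ : 0 < r₁) (hr₂ : 0 < r₂) (hb₁ : 0 < b₁) (hb₂ : 0 < b₂)
    (hδ₁ : 0 < δ₁) (hδ₂ : 0 < δ₂) (hδ₃ : 0 < δ₃) (hδ₄ : 0 < δ₄)
    (hδ : δ₁ * δ₂ ≥ δ₃ * δ₄)
    (T : ℝ × ℝ → ℝ × ℝ)
    (hT : ∀ x y : ℝ, T (x, y) =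
      (r₁ * x ^ δ₁ / (1 + x ^ δ₁ + b₁ * y ^ δ₃),
       r₂ * y ^ δ₂ / (1 + y ^ δ₂ + b₂ * x ^ δ₄))) :
    ∀ x y : ℕ → ℝ, 0 ≤ x 0 → 0 ≤ y 0 →
      (∀ t : ℕ, (x (t + 1), y (t + 1)) = T (x t, y t)) →
      ∃ p : ℝ × ℝ, T p = p ∧ p ∈ Set.Icc (0 : ℝ) r₁ ×ˢ Set.Icc (0 : ℝ) r₂ ∧
        Filter.Tendsto (fun t : ℕ => (x t, y t)) Filter.atTop (nhds p) := by
  intro x y hx0 hy0 hstep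
  have hxs : ∀ t, x (t + 1) =
      r₁ * (x t) ^ δ₁ / (1 + (x t) ^ δ₁ + b₁ * (y t) ^ δ₃) := by
    intro t; have h := hstep t; rw [hT] at h; exact congrArg Prod.fst h
  have hys : ∀ t, y (t + 1) =
      r₂ * (y t) ^ δ₂ / (1 + (y t) ^ δ₂ + b₂ * (x t) ^ δ₄) := by
    intro t; have h := hstep t; rw [hT] at h; exact congrArg Prod.snd h
  -- nonnegativity of the orbit
  have hnn : ∀ t, 0 ≤ x t ∧ 0 ≤ y t := by
    intro t; induction t with
    | zero => exact ⟨hx0, hy0⟩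
    | succ n ih =>
      obtain ⟨hxn, hyn⟩ := ih
      have h1 : 0 ≤ (x n) ^ δ₁ := Real.rpow_nonneg hxn _
      have h2 : 0 ≤ (y n) ^ δ₂ := Real.rpow_nonneg hyn _
      have h3 : 0 ≤ (y n) ^ δ₃ := Real.rpow_nonneg hyn _
      have h4 : 0 ≤ (x n) ^ δ₄ := Real.rpow_nonneg hxn _
      constructor
      · rw [hxs n]
        exact div_nonneg (mul_nonneg hr₁.le h1) (by nlinarith)
      · rw [hys n]
        exact div_nonneg (mul_nonneg hr₂.le h2) (by nlinarith)
  -- upper bounds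
  have hxub : ∀ t, x (t + 1) ≤ r₁ := by
    intro t
    rw [hxs t]
    have h1 : 0 ≤ (x t) ^ δ₁ := Real.rpow_nonneg (hnn t).1 _
    have h3 : 0 ≤ (y t) ^ δ₃ := Real.rpow_nonneg (hnn t).2 _
    rw [div_le_iff₀ (by nlinarith)]
    nlinarith [mul_nonneg hr₁.le (mul_nonneg hb₁.le h3)]
  have hyub : ∀ t, y (t + 1) ≤ r₂ := by
    intro t
    rw [hys t]
    have h2 : 0 ≤ (y t) ^ δ₂ := Real.rpow_nonneg (hnn t).2 _
    have h4 : 0 ≤ (x t) ^ δ₄ := Real.rpow_nonneg (hnn t).1 _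
    rw [div_le_iff₀ (by nlinarith)]
    nlinarith [mul_nonneg hr₂.le (mul_nonneg hb₂.le h4)]
  have hxB : ∀ t, x t ≤ max (x 0) r₁ := by
    intro t
    cases t with
    | zero => exact le_max_left _ _
    | succ n => exact (hxub n).trans (le_max_right _ _)
  have hyB : ∀ t, y t ≤ max (y 0) r₂ := by
    intro t
    cases t with
    | zero => exact le_max_left _ _
    | succ n => exact (hyub n).trans (le_max_right _ _)
  -- the finishing step: once both coordinates converge, the limit is a fixed point
  have key : ∀ Lx Ly : ℝ, Filter.Tendsto x Filter.atTop (nhds Lx) →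
      Filter.Tendsto y Filter.atTop (nhds Ly) →
      ∃ p : ℝ × ℝ, T p = p ∧ p ∈ Set.Icc (0 : ℝ) r₁ ×ˢ Set.Icc (0 : ℝ) r₂ ∧
        Filter.Tendsto (fun t : ℕ => (x t, y t)) Filter.atTop (nhds p) := by
    intro Lx Ly hLx hLy
    have hLx0 : 0 ≤ Lx := ge_of_tendsto' hLx fun t => (hnn t).1
    have hLy0 : 0 ≤ Ly := ge_of_tendsto' hLy fun t => (hnn t).2
    have hxshift : Filter.Tendsto (fun t => x (t + 1)) Filter.atTop (nhds Lx) :=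
      (Filter.tendsto_add_atTop_iff_nat 1).mpr hLx
    have hyshift : Filter.Tendsto (fun t => y (t + 1)) Filter.atTop (nhds Ly) :=
      (Filter.tendsto_add_atTop_iff_nat 1).mpr hLy
    have hrx1 : Filter.Tendsto (fun t => (x t) ^ δ₁) Filter.atTop (nhds (Lx ^ δ₁)) :=
      ((Real.continuousAt_rpow_const Lx δ₁ (Or.inr hδ₁.le)).tendsto).comp hLx
    have hrx4 : Filter.Tendsto (fun t => (x t) ^ δ₄) Filter.atTop (nhds (Lx ^ δ₄)) :=
      ((Real.continuousAt_rpow_const Lx δ₄ (Or.inr hδ₄.le)).tendsto).comp hLx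
    have hry2 : Filter.Tendsto (fun t => (y t) ^ δ₂) Filter.atTop (nhds (Ly ^ δ₂)) :=
      ((Real.continuousAt_rpow_const Ly δ₂ (Or.inr hδ₂.le)).tendsto).comp hLy
    have hry3 : Filter.Tendsto (fun t => (y t) ^ δ₃) Filter.atTop (nhds (Ly ^ δ₃)) :=
      ((Real.continuousAt_rpow_const Ly δ₃ (Or.inr hδ₃.le)).tendsto).comp hLy
    have hLxd : 0 ≤ Lx ^ δ₁ := Real.rpow_nonneg hLx0 _
    have hLxd4 : 0 ≤ Lx ^ δ₄ := Real.rpow_nonneg hLx0 _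
    have hLyd : 0 ≤ Ly ^ δ₂ := Real.rpow_nonneg hLy0 _
    have hLyd3 : 0 ≤ Ly ^ δ₃ := Real.rpow_nonneg hLy0 _
    have hden1ne : (1 + Lx ^ δ₁ + b₁ * Ly ^ δ₃) ≠ 0 := by nlinarith
    have hden2ne : (1 + Ly ^ δ₂ + b₂ * Lx ^ δ₄) ≠ 0 := by nlinarith
    have hfx : Filter.Tendsto
        (fun t => r₁ * (x t) ^ δ₁ / (1 + (x t) ^ δ₁ + b₁ * (y t) ^ δ₃))
        Filter.atTop (nhds (r₁ * Lx ^ δ₁ / (1 + Lx ^ δ₁ + b₁ * Ly ^ δ₃))) :=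
      (tendsto_const_nhds.mul hrx1).div
        ((tendsto_const_nhds.add hrx1).add (tendsto_const_nhds.mul hry3)) hden1ne
    have hgy : Filter.Tendsto
        (fun t => r₂ * (y t) ^ δ₂ / (1 + (y t) ^ δ₂ + b₂ * (x t) ^ δ₄))
        Filter.atTop (nhds (r₂ * Ly ^ δ₂ / (1 + Ly ^ δ₂ + b₂ * Lx ^ δ₄))) :=
      (tendsto_const_nhds.mul hry2).div
        ((tendsto_const_nhds.add hry2).add (tendsto_const_nhds.mul hrx4)) hden2ne
    have e1 : r₁ * Lx ^ δ₁ / (1 + Lx ^ δ₁ + b₁ * Ly ^ δ₃) = Lx :=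
      tendsto_nhds_unique (hfx.congr fun t => (hxs t).symm) hxshift
    have e2 : r₂ * Ly ^ δ₂ / (1 + Ly ^ δ₂ + b₂ * Lx ^ δ₄) = Ly :=
      tendsto_nhds_unique (hgy.congr fun t => (hys t).symm) hyshift
    refine ⟨(Lx, Ly), ?_, ?_, hLx.prodMk_nhds hLy⟩
    · rw [hT Lx Ly, Prod.mk.injEq]
      exact ⟨e1, e2⟩
    · refine Set.mk_mem_prod ⟨hLx0, ?_⟩ ⟨hLy0, ?_⟩
      · exact le_of_tendsto' hxshift hxub
      · exact le_of_tendsto' hyshift hyub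
  -- case analysis on the type of the orbit
  by_cases hA : ∃ t₀, x t₀ ≤ x (t₀ + 1) ∧ y (t₀ + 1) ≤ y t₀
  · obtain ⟨t₀, hKx, hKy⟩ := hA
    have mono : ∀ n, x (t₀ + n) ≤ x (t₀ + n + 1) ∧ y (t₀ + n + 1) ≤ y (t₀ + n) := by
      intro n; induction n with
      | zero => exact ⟨hKx, hKy⟩
      | succ n ih =>
        obtain ⟨ihx, ihy⟩ := ih
        refine ⟨?_, ?_⟩
        · show x (t₀ + n + 1) ≤ x (t₀ + n + 1 + 1)
          rw [hxs (t₀ + n), hxs (t₀ + n + 1)]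
          exact bhMono r₁ b₁ δ₁ δ₃ hr₁ hb₁ hδ₁ hδ₃ (hnn _).1 ihx (hnn _).2 ihy
        · show y (t₀ + n + 1 + 1) ≤ y (t₀ + n + 1)
          rw [hys (t₀ + n), hys (t₀ + n + 1)]
          exact bhMono r₂ b₂ δ₂ δ₄ hr₂ hb₂ hδ₂ hδ₄ (hnn _).2 ihy (hnn _).1 ihx
    obtain ⟨Lx, hLx⟩ := evMonoTendsto x t₀ (fun s hs => by
      obtain ⟨n, rfl⟩ := Nat.exists_eq_add_of_le hs; exact (mono n).1)
      (max (x 0) r₁) hxB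
    obtain ⟨Ly, hLy⟩ := evAntiTendsto y t₀ (fun s hs => by
      obtain ⟨n, rfl⟩ := Nat.exists_eq_add_of_le hs; exact (mono n).2)
      0 (fun t => (hnn t).2)
    exact key Lx Ly hLx hLy
  by_cases hA' : ∃ t₀, x (t₀ + 1) ≤ x t₀ ∧ y t₀ ≤ y (t₀ + 1)
  · obtain ⟨t₀, hKx, hKy⟩ := hA'
    have mono : ∀ n, x (t₀ + n + 1) ≤ x (t₀ + n) ∧ y (t₀ + n) ≤ y (t₀ + n + 1) := by
      intro n; induction n with
      | zero => exact ⟨hKx, hKy⟩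
      | succ n ih =>
        obtain ⟨ihx, ihy⟩ := ih
        refine ⟨?_, ?_⟩
        · show x (t₀ + n + 1 + 1) ≤ x (t₀ + n + 1)
          rw [hxs (t₀ + n), hxs (t₀ + n + 1)]
          exact bhMono r₁ b₁ δ₁ δ₃ hr₁ hb₁ hδ₁ hδ₃ (hnn _).1 ihx (hnn _).2 ihy
        · show y (t₀ + n + 1) ≤ y (t₀ + n + 1 + 1)
          rw [hys (t₀ + n), hys (t₀ + n + 1)]
          exact bhMono r₂ b₂ δ₂ δ₄ hr₂ hb₂ hδ₂ hδ₄ (hnn _).2 ihy (hnn _).1 ihx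
    obtain ⟨Lx, hLx⟩ := evAntiTendsto x t₀ (fun s hs => by
      obtain ⟨n, rfl⟩ := Nat.exists_eq_add_of_le hs; exact (mono n).1)
      0 (fun t => (hnn t).1)
    obtain ⟨Ly, hLy⟩ := evMonoTendsto y t₀ (fun s hs => by
      obtain ⟨n, rfl⟩ := Nat.exists_eq_add_of_le hs; exact (mono n).2)
      (max (y 0) r₂) hyB
    exact key Lx Ly hLx hLy
  -- remaining case: each step both coordinates move strictly in the same direction
  push_neg at hA hA'
  have hδ' : δ₃ * δ₄ ≤ δ₁ * δ₂ := hδ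
  rcases le_total (x 0) (x 1) with h01 | h01
  · -- both coordinates nondecreasing forever
    have claim : ∀ t, x t ≤ x (t + 1) ∧ y t ≤ y (t + 1) := by
      intro t; induction t with
      | zero => exact ⟨h01, (hA 0 h01).le⟩
      | succ n ih =>
        rcases le_total (x (n + 1)) (x (n + 2)) with h | h
        · exact ⟨h, (hA (n + 1) h).le⟩
        · have hy2 : y (n + 2) ≤ y (n + 1) := (hA' (n + 1) h).le
          have hrefl := bhReflect r₁ r₂ b₁ b₂ δ₁ δ₂ δ₃ δ₄ hr₁ hr₂ hb₁ hb₂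
            hδ₁ hδ₂ hδ₃ hδ₄ hδ' (hnn (n + 1)).1 (hnn (n + 1)).2 (hnn n).1 (hnn n).2
            (by rw [← hxs (n + 1), ← hxs n]; exact h)
            (by rw [← hys (n + 1), ← hys n]; exact hy2)
          exact absurd (hA n ih.1) (not_lt.mpr hrefl.2)
    obtain ⟨Lx, hLx⟩ := evMonoTendsto x 0 (fun s _ => (claim s).1) (max (x 0) r₁) hxB
    obtain ⟨Ly, hLy⟩ := evMonoTendsto y 0 (fun s _ => (claim s).2) (max (y 0) r₂) hyB
    exact key Lx Ly hLx hLy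
  · -- both coordinates nonincreasing forever
    have claim : ∀ t, x (t + 1) ≤ x t ∧ y (t + 1) ≤ y t := by
      intro t; induction t with
      | zero => exact ⟨h01, (hA' 0 h01).le⟩
      | succ n ih =>
        rcases le_total (x (n + 2)) (x (n + 1)) with h | h
        · exact ⟨h, (hA' (n + 1) h).le⟩
        · have hy2 : y (n + 1) ≤ y (n + 2) := (hA (n + 1) h).le
          have hrefl := bhReflect r₁ r₂ b₁ b₂ δ₁ δ₂ δ₃ δ₄ hr₁ hr₂ hb₁ hb₂
            hδ₁ hδ₂ hδ₃ hδ₄ hδ' (hnn n).1 (hnn n).2 (hnn (n + 1)).1 (hnn (n + 1)).2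
            (by rw [← hxs (n + 1), ← hxs n]; exact h)
            (by rw [← hys (n + 1), ← hys n]; exact hy2)
          exact absurd (hA' n ih.1) (not_lt.mpr hrefl.2)
    obtain ⟨Lx, hLx⟩ := evAntiTendsto x 0 (fun s _ => (claim s).1) 0 (fun t => (hnn t).1)
    obtain ⟨Ly, hLy⟩ := evAntiTendsto y 0 (fun s _ => (claim s).2) 0 (fun t => (hnn t).2)
    exact key Lx Ly hLx hLy
end

section
/- Assume Condition H1: δ₁ > 1, δ₂ > 1, r₁ > δ₁(δ₁−1)^{(1/δ₁)−1} and r₂ > δ₂(δ₂−1)^{(1/δ₂)−1}, and let A₁ be the smaller positive fixed point of H₁(u) = r₁u^{δ₁}/(1+u^{δ₁}). Then for every initial condition (x₀,y₀) ∈ [0,∞)² with x₀ < A₁, the orbit (x_{t+1},y_{t+1}) = T(x_t,y_t) of the competition map T satisfies x_t → 0 as t → ∞. -/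
open Real Filter

/-- Below the smallest positive fixed point, the Beverton–Holt map lies strictly
below the diagonal. -/
lemma bh_lt_self (r₁ δ₁ : ℝ) (hδ₁ : 1 < δ₁) (hr₁ : 0 < r₁)
    (H₁ : ℝ → ℝ) (hH₁ : ∀ u : ℝ, H₁ u = r₁ * u ^ δ₁ / (1 + u ^ δ₁))
    (A₁ : ℝ) (hA₁ : 0 < A₁)
    (hmin₁ : ∀ u : ℝ, 0 < u → H₁ u = u → A₁ ≤ u) :
    ∀ u : ℝ, 0 < u → u < A₁ → H₁ u < u := by
  intro u hu huA
  by_contra hcon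
  push_neg at hcon
  rcases eq_or_lt_of_le hcon with heq | hlt
  · exact absurd (hmin₁ u hu heq.symm) (not_le.mpr huA)
  -- find small ε with H₁ ε < ε
  set c : ℝ := (1 / (2 * r₁)) ^ (1 / (δ₁ - 1)) with hc
  have hcpos : 0 < c := Real.rpow_pos_of_pos (by positivity) _
  set ε : ℝ := min (u / 2) c with hε
  have hεpos : 0 < ε := lt_min (by linarith) hcpos
  have hεu : ε < u := lt_of_le_of_lt (min_le_left _ _) (by linarith)
  have hεc : ε ≤ c := min_le_right _ _
  have hδ1 : (0:ℝ) < δ₁ - 1 := by linarith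
  have hεpow : ε ^ (δ₁ - 1) ≤ 1 / (2 * r₁) := by
    have h1 : ε ^ (δ₁ - 1) ≤ c ^ (δ₁ - 1) :=
      Real.rpow_le_rpow hεpos.le hεc hδ1.le
    have h2 : c ^ (δ₁ - 1) = 1 / (2 * r₁) := by
      rw [hc, ← Real.rpow_mul (by positivity), one_div_mul_cancel hδ1.ne',
        Real.rpow_one]
    linarith
  have hHε : H₁ ε < ε := by
    rw [hH₁]
    have hden : (0:ℝ) < 1 + ε ^ δ₁ := by positivity
    rw [div_lt_iff₀ hden]
    have hsplit : ε ^ δ₁ = ε ^ (δ₁ - 1) * ε := by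
      rw [Real.rpow_sub hεpos, Real.rpow_one, div_mul_cancel₀ _ hεpos.ne']
    have : r₁ * ε ^ δ₁ = (r₁ * ε ^ (δ₁ - 1)) * ε := by
      rw [hsplit]; ring
    rw [this]
    have h3 : r₁ * ε ^ (δ₁ - 1) ≤ 1 / 2 := by
      have := mul_le_mul_of_nonneg_left hεpow hr₁.le
      rw [mul_one_div] at this
      calc r₁ * ε ^ (δ₁ - 1) ≤ r₁ / (2 * r₁) := this
        _ = 1 / 2 := by rw [div_eq_div_iff (by positivity) (by norm_num : (2:ℝ) ≠ 0)]; ring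
    have hεd : 0 ≤ ε ^ δ₁ := Real.rpow_nonneg hεpos.le _
    nlinarith
  -- IVT on [ε, u]
  have hcontOn : ContinuousOn (fun v => H₁ v - v) (Set.Icc ε u) := by
    intro v hv
    have hv0 : v ≠ 0 := (lt_of_lt_of_le hεpos hv.1).ne'
    have hpow : ContinuousAt (fun w : ℝ => w ^ δ₁) v :=
      Real.continuousAt_rpow_const v δ₁ (Or.inl hv0)
    have hden : (1 : ℝ) + v ^ δ₁ ≠ 0 := by
      have : (0:ℝ) ≤ v ^ δ₁ := Real.rpow_nonneg (lt_of_lt_of_le hεpos hv.1).le _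
      positivity
    have hcont : ContinuousAt (fun w => H₁ w - w) v := by
      have : ContinuousAt (fun w => r₁ * w ^ δ₁ / (1 + w ^ δ₁) - w) v :=
        (((continuousAt_const.mul hpow).div
          (continuousAt_const.add hpow) hden).sub continuousAt_id)
      exact this.congr (by filter_upwards with w using by rw [hH₁])
    exact hcont.continuousWithinAt
  have hmem : (0:ℝ) ∈ Set.Icc ((fun v => H₁ v - v) ε) ((fun v => H₁ v - v) u) :=
    ⟨by simpa using hHε.le, by simpa using hlt.le⟩
  obtain ⟨w, hw, hweq⟩ := intermediate_value_Icc hεu.le hcontOn hmem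
  have hw0 : 0 < w := lt_of_lt_of_le hεpos hw.1
  have hwfix : H₁ w = w := by linarith [sub_eq_zero.mp hweq]
  have := hmin₁ w hw0 hwfix
  have : A₁ ≤ u := this.trans hw.2
  linarith

/-- Under Condition H1, if the initial `x`-density is below the Allee
threshold `A₁` (the smaller positive fixed point of `H₁`), then species `x`
goes extinct along the orbit of the competition map `T`. -/
theorem stmt_13 (r₁ r₂ b₁ b₂ δ₁ δ₂ δ₃ δ₄ : ℝ)
    (hb₁ : 0 < b₁) (hb₂ : 0 < b₂) (hδ₃ : 0 < δ₃) (hδ₄ : 0 < δ₄)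
    (hδ₁ : 1 < δ₁) (hδ₂ : 1 < δ₂)
    (hr₁ : r₁ > δ₁ * (δ₁ - 1) ^ (1 / δ₁ - 1))
    (hr₂ : r₂ > δ₂ * (δ₂ - 1) ^ (1 / δ₂ - 1))
    (H₁ : ℝ → ℝ)
    (hH₁ : ∀ u : ℝ, H₁ u = r₁ * u ^ δ₁ / (1 + u ^ δ₁))
    (A₁ : ℝ) (hA₁ : 0 < A₁) (hfixA₁ : H₁ A₁ = A₁)
    (hmin₁ : ∀ u : ℝ, 0 < u → H₁ u = u → A₁ ≤ u)
    (T : ℝ × ℝ → ℝ × ℝ)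
    (hT : ∀ x y : ℝ, T (x, y) =
      (r₁ * x ^ δ₁ / (1 + x ^ δ₁ + b₁ * y ^ δ₃),
       r₂ * y ^ δ₂ / (1 + y ^ δ₂ + b₂ * x ^ δ₄))) :
    ∀ x y : ℕ → ℝ, 0 ≤ x 0 → 0 ≤ y 0 → x 0 < A₁ →
      (∀ t : ℕ, (x (t + 1), y (t + 1)) = T (x t, y t)) →
      Filter.Tendsto x Filter.atTop (nhds 0) := by
  intro x y hx0 hy0 hxA horb
  have hr₁pos : 0 < r₁ := lt_trans
    (mul_pos (by linarith) (Real.rpow_pos_of_pos (by linarith) _)) hr₁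
  have hr₂pos : 0 < r₂ := lt_trans
    (mul_pos (by linarith) (Real.rpow_pos_of_pos (by linarith) _)) hr₂
  have key := bh_lt_self r₁ δ₁ hδ₁ hr₁pos H₁ hH₁ A₁ hA₁ hmin₁
  -- recurrences
  have hstep : ∀ t, x (t + 1) = r₁ * (x t) ^ δ₁ / (1 + (x t) ^ δ₁ + b₁ * (y t) ^ δ₃)
      ∧ y (t + 1) = r₂ * (y t) ^ δ₂ / (1 + (y t) ^ δ₂ + b₂ * (x t) ^ δ₄) := by
    intro t
    have h := horb t
    rw [hT (x t) (y t), Prod.mk.injEq] at h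
    exact h
  -- nonnegativity
  have hnn : ∀ t, 0 ≤ x t ∧ 0 ≤ y t := by
    intro t
    induction t with
    | zero => exact ⟨hx0, hy0⟩
    | succ n ih =>
      obtain ⟨hxn, hyn⟩ := ih
      constructor
      · rw [(hstep n).1]
        have := Real.rpow_nonneg hxn δ₁
        have := Real.rpow_nonneg hyn δ₃
        positivity
      · rw [(hstep n).2]
        have := Real.rpow_nonneg hxn δ₄
        have := Real.rpow_nonneg hyn δ₂
        positivity
  -- x (t+1) ≤ H₁ (x t)
  have hleH : ∀ t, x (t + 1) ≤ H₁ (x t) := by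
    intro t
    rw [(hstep t).1, hH₁]
    have hxn := (hnn t).1
    have hyn := (hnn t).2
    have h1 : (0:ℝ) ≤ r₁ * (x t) ^ δ₁ := by
      have := Real.rpow_nonneg hxn δ₁; positivity
    have h2 : (0:ℝ) < 1 + (x t) ^ δ₁ := by
      have := Real.rpow_nonneg hxn δ₁; positivity
    have h3 : (0:ℝ) ≤ b₁ * (y t) ^ δ₃ := by
      have := Real.rpow_nonneg hyn δ₃; positivity
    exact div_le_div_of_nonneg_left h1 h2 (by linarith) |>.trans_eq rfl
  -- H₁ u ≤ u for 0 ≤ u < A₁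
  have hH₁le : ∀ u : ℝ, 0 ≤ u → u < A₁ → H₁ u ≤ u := by
    intro u hu huA
    rcases eq_or_lt_of_le hu with h0 | hpos
    · rw [hH₁, ← h0, Real.zero_rpow (by intro h; rw [h] at hδ₁; linarith : δ₁ ≠ 0)]
      norm_num
    · exact (key u hpos huA).le
  -- monotone decrease and boundedness by A₁
  have hmono : ∀ t, x (t + 1) ≤ x t ∧ x t < A₁ := by
    intro t
    induction t with
    | zero => exact ⟨(hleH 0).trans (hH₁le _ hx0 hxA), hxA⟩
    | succ n ih =>
      have hxn1 : x (n + 1) < A₁ := lt_of_le_of_lt ih.1 ih.2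
      exact ⟨(hleH (n+1)).trans (hH₁le _ (hnn (n+1)).1 hxn1), hxn1⟩
  have hanti : Antitone x := antitone_nat_of_succ_le fun n => (hmono n).1
  have hbdd : BddBelow (Set.range x) := ⟨0, fun v ⟨t, ht⟩ => ht ▸ (hnn t).1⟩
  set L : ℝ := ⨅ t, x t with hL
  have htend : Tendsto x atTop (nhds L) := tendsto_atTop_ciInf hanti hbdd
  have hL0 : 0 ≤ L := le_ciInf fun t => (hnn t).1
  have hLlt : L < A₁ := lt_of_le_of_lt (ciInf_le hbdd 0) hxA
  rcases eq_or_lt_of_le hL0 with h0 | hpos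
  · rwa [← h0] at htend
  · exfalso
    -- L ≤ H₁ L via limits
    have hcontH : ContinuousAt H₁ L := by
      have hpow : ContinuousAt (fun w : ℝ => w ^ δ₁) L :=
        Real.continuousAt_rpow_const L δ₁ (Or.inl hpos.ne')
      have hden : (1 : ℝ) + L ^ δ₁ ≠ 0 := by
        have : (0:ℝ) ≤ L ^ δ₁ := Real.rpow_nonneg hL0 _
        positivity
      have : ContinuousAt (fun w => r₁ * w ^ δ₁ / (1 + w ^ δ₁)) L :=
        (continuousAt_const.mul hpow).div (continuousAt_const.add hpow) hden
      exact this.congr (by filter_upwards with w using by rw [hH₁])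
    have h1 : Tendsto (fun t => x (t + 1)) atTop (nhds L) :=
      htend.comp (tendsto_add_atTop_nat 1)
    have h2 : Tendsto (fun t => H₁ (x t)) atTop (nhds (H₁ L)) :=
      hcontH.tendsto.comp htend
    have hLH : L ≤ H₁ L := le_of_tendsto_of_tendsto' h1 h2 hleH
    exact absurd hLH (not_le.mpr (key L hpos hLlt))
end

section
/- Assume Condition H1: δ₁ > 1, δ₂ > 1, r₁ > δ₁(δ₁−1)^{(1/δ₁)−1} and r₂ > δ₂(δ₂−1)^{(1/δ₂)−1}, and let Aᵢ < Kᵢ be the two positive fixed points of Hᵢ(u) = rᵢu^{δᵢ}/(1+u^{δᵢ}) for i = 1,2. Set a₁ = 1 + b₁A₂^{δ₃} and assume also Condition H2: r₁ > a₁^{1/δ₁}·δ₁(δ₁−1)^{(1/δ₁)−1}, so that the map u ↦ r₁u^{δ₁}/(a₁+u^{δ₁}) has exactly two positive fixed points A₁^{a₁} < K₁^{a₁}. Then for every initial condition (x₀,y₀) with x₀ > A₁^{a₁} and 0 ≤ y₀ < A₂, the orbit (x_{t+1},y_{t+1}) = T(x_t,y_t) of the competition map T converges to (K₁,0) as t →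 ∞. -/
open Filter Topology

/-- Monotonicity of the Beverton–Holt type map. -/
private lemma bh_mono {r a δ : ℝ} (hr : 0 < r) (ha : 0 < a) (hδ : 0 < δ)
    {u v : ℝ} (hu : 0 ≤ u) (huv : u ≤ v) :
    r * u ^ δ / (a + u ^ δ) ≤ r * v ^ δ / (a + v ^ δ) := by
  have hu' : (0:ℝ) ≤ u ^ δ := Real.rpow_nonneg hu δ
  have hv' : (0:ℝ) ≤ v ^ δ := Real.rpow_nonneg (hu.trans huv) δ
  have h : u ^ δ ≤ v ^ δ := Real.rpow_le_rpow hu huv hδ.le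
  rw [div_le_div_iff₀ (by linarith) (by linarith)]
  nlinarith [mul_le_mul_of_nonneg_left h (mul_pos hr ha).le]

private lemma bh_strict_mono {r a δ : ℝ} (hr : 0 < r) (ha : 0 < a) (hδ : 0 < δ)
    {u v : ℝ} (hu : 0 < u) (huv : u < v) :
    r * u ^ δ / (a + u ^ δ) < r * v ^ δ / (a + v ^ δ) := by
  have hu' : (0:ℝ) < u ^ δ := Real.rpow_pos_of_pos hu δ
  have hv' : (0:ℝ) < v ^ δ := Real.rpow_pos_of_pos (hu.trans huv) δ
  have h : u ^ δ < v ^ δ := Real.rpow_lt_rpow hu.le huv hδ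
  rw [div_lt_div_iff₀ (by linarith) (by linarith)]
  nlinarith [mul_lt_mul_of_pos_left h (mul_pos hr ha)]

/-- Below any positive `w` there is a point where the map is below the identity. -/
private lemma bh_small {r a δ : ℝ} (hr : 0 < r) (ha : 0 < a) (hδ : 1 < δ)
    {w : ℝ} (hw : 0 < w) :
    ∃ u, 0 < u ∧ u < w ∧ r * u ^ δ / (a + u ^ δ) < u := by
  have hs0 : (0:ℝ) < (a / (2 * r)) ^ (1 / (δ - 1)) :=
    Real.rpow_pos_of_pos (by positivity) _
  set s := (a / (2 * r)) ^ (1 / (δ - 1)) with hs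
  refine ⟨min (w/2) s, by positivity, lt_of_le_of_lt (min_le_left _ _) (by linarith), ?_⟩
  set u := min (w/2) s with hudef
  have hu0 : 0 < u := by positivity
  have h1 : u ^ (δ - 1) ≤ s ^ (δ - 1) :=
    Real.rpow_le_rpow hu0.le (min_le_right _ _) (by linarith)
  have h2 : s ^ (δ - 1) = a / (2 * r) := by
    rw [hs, ← Real.rpow_mul (by positivity), one_div,
      inv_mul_cancel₀ (by linarith : δ - 1 ≠ 0), Real.rpow_one]
  have h3 : u ^ δ = u ^ (δ - 1) * u := by
    have h := Real.rpow_add_one hu0.ne' (δ - 1)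
    rw [sub_add_cancel] at h
    exact h
  have hup : (0:ℝ) < u ^ δ := Real.rpow_pos_of_pos hu0 δ
  have hkey : r * u ^ δ ≤ a / 2 * u := by
    have := mul_le_mul_of_nonneg_right (h1.trans_eq h2) hu0.le
    calc r * u ^ δ = r * (u ^ (δ - 1) * u) := by rw [h3]
      _ ≤ r * (a / (2 * r) * u) := by nlinarith
      _ = a / 2 * u := by field_simp
  rw [div_lt_iff₀ (by linarith)]
  nlinarith

/-- Fixed point from IVT, increasing or decreasing sign pattern. -/
private lemma bh_fix_between {r a δ : ℝ} (ha : 0 < a)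
    {u v : ℝ} (hu : 0 < u) (huv : u ≤ v)
    (hsign : (r * u ^ δ / (a + u ^ δ) ≤ u ∧ v ≤ r * v ^ δ / (a + v ^ δ)) ∨
             (r * v ^ δ / (a + v ^ δ) ≤ v ∧ u ≤ r * u ^ δ / (a + u ^ δ))) :
    ∃ w, u ≤ w ∧ w ≤ v ∧ r * w ^ δ / (a + w ^ δ) = w := by
  set f : ℝ → ℝ := fun t => r * t ^ δ / (a + t ^ δ) - t with hf
  have hcont : ContinuousOn f (Set.Icc u v) := by
    intro t ht
    have ht0 : 0 < t := lt_of_lt_of_le hu ht.1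
    have h : ContinuousAt (fun t : ℝ => t ^ δ) t :=
      Real.continuousAt_rpow_const t δ (Or.inl ht0.ne')
    have hden : a + t ^ δ ≠ 0 := by
      have := Real.rpow_nonneg ht0.le δ; positivity
    exact (((continuousAt_const.mul h).div (continuousAt_const.add h) hden).sub
      continuousAt_id).continuousWithinAt
  rcases hsign with ⟨h1, h2⟩ | ⟨h1, h2⟩
  · obtain ⟨w, hw, hw0⟩ := intermediate_value_Icc huv hcont
      (⟨by simpa [hf] using sub_nonpos.mpr h1, by simpa [hf] using sub_nonneg.mpr h2⟩ :
        (0:ℝ) ∈ Set.Icc (f u) (f v))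
    exact ⟨w, hw.1, hw.2, by have : f w = 0 := hw0; simp only [hf] at this; linarith⟩
  · obtain ⟨w, hw, hw0⟩ := intermediate_value_Icc' huv hcont
      (⟨by simpa [hf] using sub_nonpos.mpr h1, by simpa [hf] using sub_nonneg.mpr h2⟩ :
        (0:ℝ) ∈ Set.Icc (f v) (f u))
    exact ⟨w, hw.1, hw.2, by have : f w = 0 := hw0; simp only [hf] at this; linarith⟩

/-- Below the Allee threshold, the map is strictly below the identity. -/
private lemma bh_below_left {r a δ A K : ℝ} (hr : 0 < r) (ha : 0 < a) (hδ : 1 < δ)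
    (hA : 0 < A) (hAK : A < K)
    (huniq : ∀ u : ℝ, 0 < u → r * u ^ δ / (a + u ^ δ) = u → u = A ∨ u = K) :
    ∀ u, 0 < u → u < A → r * u ^ δ / (a + u ^ δ) < u := by
  intro u hu huA
  by_contra hcon
  push_neg at hcon
  obtain ⟨u₀, hu₀, hu₀u, hsmall⟩ := bh_small hr ha hδ hu
  obtain ⟨w, hw1, hw2, hwfix⟩ := bh_fix_between ha hu₀ hu₀u.le (Or.inl ⟨hsmall.le, hcon⟩)
  rcases huniq w (hu₀.trans_le hw1) hwfix with h' | h' <;>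
    [linarith; linarith]

/-- Above the carrying capacity, the map is strictly below the identity. -/
private lemma bh_above_right {r a δ A K : ℝ} (hr : 0 < r) (ha : 0 < a) (hδ : 1 < δ)
    (hA : 0 < A) (hAK : A < K)
    (huniq : ∀ u : ℝ, 0 < u → r * u ^ δ / (a + u ^ δ) = u → u = A ∨ u = K) :
    ∀ u, K < u → r * u ^ δ / (a + u ^ δ) < u := by
  intro u hu
  have hu0 : 0 < u := lt_trans (lt_trans hA hAK) hu
  by_contra hcon
  push_neg at hcon
  set R := max u r + 1 with hR
  have huR : u ≤ R := by
    have := le_max_left u r; linarith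
  have hR0 : 0 < R := lt_of_lt_of_le hu0 huR
  have hRr : r < R := by have := le_max_right u r; linarith
  have hFR : r * R ^ δ / (a + R ^ δ) < R := by
    have hRp : (0:ℝ) < R ^ δ := Real.rpow_pos_of_pos hR0 δ
    rw [div_lt_iff₀ (by linarith)]
    nlinarith
  obtain ⟨w, hw1, hw2, hwfix⟩ := bh_fix_between ha hu0 huR (Or.inr ⟨hFR.le, hcon⟩)
  rcases huniq w (hu0.trans_le hw1) hwfix with h' | h' <;>
    [linarith; linarith]

/-- Between a point `p` where the map is above the identity and the carrying
capacity, the map stays above the identity. -/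
private lemma bh_above_middle {r a δ A K p : ℝ} (hr : 0 < r) (ha : 0 < a) (hδ : 1 < δ)
    (hA : 0 < A) (hAK : A < K)
    (huniq : ∀ u : ℝ, 0 < u → r * u ^ δ / (a + u ^ δ) = u → u = A ∨ u = K)
    (hAp : A < p) (hfp : p < r * p ^ δ / (a + p ^ δ)) :
    ∀ u, p ≤ u → u < K → u < r * u ^ δ / (a + u ^ δ) := by
  intro u hpu huK
  have hp0 : 0 < p := hA.trans hAp
  rcases eq_or_lt_of_le hpu with rfl | hpu'
  · exact hfp
  by_contra hcon
  push_neg at hcon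
  obtain ⟨w, hw1, hw2, hwfix⟩ := bh_fix_between ha hp0 hpu'.le (Or.inr ⟨hcon, hfp.le⟩)
  rcases huniq w (hp0.trans_le hw1) hwfix with h' | h' <;>
    [linarith; linarith]

private lemma bh_nonneg {r X Y : ℝ} (hr : 0 ≤ r) (hX : 0 ≤ X) (hY : 0 ≤ Y) :
    0 ≤ r * X / (1 + X + Y) := by positivity

private lemma bh_le_noY {r X Y : ℝ} (hr : 0 ≤ r) (hX : 0 ≤ X) (hY : 0 ≤ Y) :
    r * X / (1 + X + Y) ≤ r * X / (1 + X) :=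
  div_le_div_of_nonneg_left (by positivity) (by linarith) (by linarith)

private lemma bh_ge_lower {r X Y Z : ℝ} (hr : 0 ≤ r) (hX : 0 ≤ X) (hY : 0 ≤ Y)
    (hYZ : Y ≤ Z) : r * X / (1 + Z + X) ≤ r * X / (1 + X + Y) :=
  div_le_div_of_nonneg_left (by positivity) (by linarith) (by linarith)

private lemma bh_le_r {r P : ℝ} (hr : 0 < r) (hP : 0 < P) : r * P / (1 + P) ≤ r := by
  rw [div_le_iff₀ (by linarith)]
  nlinarith

private lemma bh_fix_lt_r {r P K : ℝ} (hP : 0 < P) (hK : 0 < K)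
    (hfix : r * P / (1 + P) = K) : K < r := by
  rw [div_eq_iff (by linarith : (1:ℝ) + P ≠ 0)] at hfix
  nlinarith

private lemma bh_r_pos {r δ : ℝ} (hδ : 1 < δ) (h : δ * (δ - 1) ^ (1 / δ - 1) < r) :
    0 < r := by
  have hp := Real.rpow_pos_of_pos (show (0:ℝ) < δ - 1 by linarith) (1 / δ - 1)
  nlinarith

private lemma bh_step_est {r η X Y : ℝ} (hr : 0 < r) (hX : 0 < X) (hY : 0 ≤ Y)
    (hYη : Y ≤ η) (hη : 0 < η) :
    (1 - η) * (r * X / (1 + X)) ≤ r * X / (1 + X + Y) := by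
  rw [mul_div_assoc']
  rw [div_le_div_iff₀ (by linarith) (by linarith)]
  have h1 : 0 ≤ r * X := by positivity
  nlinarith [mul_le_mul_of_nonneg_left hYη h1, mul_nonneg (mul_nonneg hη.le h1) hX.le,
    mul_nonneg (mul_nonneg hη.le h1) hY]

private lemma bh_eta_bound {μ r : ℝ} (hμ : 0 < μ) (hr : 0 < r) :
    min (μ / (2 * (2 * r + 1))) (1 / 2) * (2 * r) ≤ μ := by
  have h1 : min (μ / (2 * (2 * r + 1))) (1 / 2) ≤ μ / (2 * (2 * r + 1)) := min_le_left _ _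
  have h2 : (0:ℝ) < 2 * (2 * r + 1) := by linarith
  have h3 : μ / (2 * (2 * r + 1)) * (2 * r) ≤ μ := by
    rw [div_mul_eq_mul_div, div_le_iff₀ h2]
    nlinarith
  nlinarith

private lemma bh_div_le_div_left {n d e : ℝ} (hn : 0 ≤ n) (hd : 0 < d) (hde : d ≤ e) :
    n / e ≤ n / d :=
  div_le_div_of_nonneg_left hn hd hde

set_option maxHeartbeats 1000000 in
/-- Under Conditions H1 and H2, every orbit of the competition map `T`
starting with `x₀ > A₁^{a₁}` and `0 ≤ y₀ < A₂` converges to `(K₁, 0)`. -/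
theorem stmt_15 (r₁ r₂ b₁ b₂ δ₁ δ₂ δ₃ δ₄ : ℝ)
    (hb₁ : 0 < b₁) (hb₂ : 0 < b₂) (hδ₃ : 0 < δ₃) (hδ₄ : 0 < δ₄)
    (hδ₁ : 1 < δ₁) (hδ₂ : 1 < δ₂)
    (hr₁ : r₁ > δ₁ * (δ₁ - 1) ^ (1 / δ₁ - 1))
    (hr₂ : r₂ > δ₂ * (δ₂ - 1) ^ (1 / δ₂ - 1))
    (H₁ H₂ : ℝ → ℝ)
    (hH₁ : ∀ u : ℝ, H₁ u = r₁ * u ^ δ₁ / (1 + u ^ δ₁))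
    (hH₂ : ∀ u : ℝ, H₂ u = r₂ * u ^ δ₂ / (1 + u ^ δ₂))
    (A₁ K₁ A₂ K₂ : ℝ)
    (hA₁ : 0 < A₁) (hAK₁ : A₁ < K₁)
    (hfixA₁ : H₁ A₁ = A₁) (hfixK₁ : H₁ K₁ = K₁)
    (huniq₁ : ∀ u : ℝ, 0 < u → H₁ u = u → u = A₁ ∨ u = K₁)
    (hA₂ : 0 < A₂) (hAK₂ : A₂ < K₂)
    (hfixA₂ : H₂ A₂ = A₂) (hfixK₂ : H₂ K₂ = K₂)
    (huniq₂ : ∀ u : ℝ, 0 < u → H₂ u = u → u = A₂ ∨ u = K₂)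
    (a₁ : ℝ) (ha₁ : a₁ = 1 + b₁ * A₂ ^ δ₃)
    (hH2cond : r₁ > a₁ ^ (1 / δ₁) * δ₁ * (δ₁ - 1) ^ (1 / δ₁ - 1))
    (G₁ : ℝ → ℝ)
    (hG₁ : ∀ u : ℝ, G₁ u = r₁ * u ^ δ₁ / (a₁ + u ^ δ₁))
    (A₁a K₁a : ℝ)
    (hA₁a : 0 < A₁a) (hA₁aK₁a : A₁a < K₁a)
    (hfixA₁a : G₁ A₁a = A₁a) (hfixK₁a : G₁ K₁a = K₁a)
    (huniq₁a : ∀ u : ℝ, 0 < u → G₁ u = u → u = A₁a ∨ u = K₁a)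
    (T : ℝ × ℝ → ℝ × ℝ)
    (hT : ∀ x y : ℝ, T (x, y) =
      (r₁ * x ^ δ₁ / (1 + x ^ δ₁ + b₁ * y ^ δ₃),
       r₂ * y ^ δ₂ / (1 + y ^ δ₂ + b₂ * x ^ δ₄))) :
    ∀ x y : ℕ → ℝ, A₁a < x 0 → 0 ≤ y 0 → y 0 < A₂ →
      (∀ t : ℕ, (x (t + 1), y (t + 1)) = T (x t, y t)) →
      Filter.Tendsto (fun t : ℕ => (x t, y t)) Filter.atTop (nhds (K₁, 0)) := by
  intro x y hx0 hy00 hy0A hstep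
  -- basic positivity
  have hδ₁0 : (0:ℝ) < δ₁ := by linarith
  have hδ₂0 : (0:ℝ) < δ₂ := by linarith
  have hr₁0 : 0 < r₁ := bh_r_pos hδ₁ hr₁
  have hr₂0 : 0 < r₂ := bh_r_pos hδ₂ hr₂
  have ha₁1 : 1 < a₁ := by
    have h : 0 < b₁ * A₂ ^ δ₃ := by
      have := Real.rpow_pos_of_pos hA₂ δ₃; positivity
    rw [ha₁]; linarith
  have ha₁0 : 0 < a₁ := by linarith
  have huniq₁' : ∀ u : ℝ, 0 < u → r₁ * u ^ δ₁ / (1 + u ^ δ₁) = u → u = A₁ ∨ u = K₁ := by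
    intro u hu h; exact huniq₁ u hu (by rw [hH₁]; exact h)
  have huniq₂' : ∀ u : ℝ, 0 < u → r₂ * u ^ δ₂ / (1 + u ^ δ₂) = u → u = A₂ ∨ u = K₂ := by
    intro u hu h; exact huniq₂ u hu (by rw [hH₂]; exact h)
  -- component recursions
  have hxf : ∀ t, x (t+1) = r₁ * (x t) ^ δ₁ / (1 + (x t) ^ δ₁ + b₁ * (y t) ^ δ₃) := by
    intro t
    have h := hstep t
    rw [hT] at h
    exact congrArg Prod.fst h
  have hyf : ∀ t, y (t+1) = r₂ * (y t) ^ δ₂ / (1 + (y t) ^ δ₂ + b₂ * (x t) ^ δ₄) := by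
    intro t
    have h := hstep t
    rw [hT] at h
    exact congrArg Prod.snd h
  -- H₂ is ≤ id on [0, A₂)
  have hH₂le : ∀ u, 0 ≤ u → u < A₂ → r₂ * u ^ δ₂ / (1 + u ^ δ₂) ≤ u := by
    intro u hu huA
    rcases eq_or_lt_of_le hu with rfl | hu'
    · rw [Real.zero_rpow (by linarith : δ₂ ≠ 0)]; norm_num
    · exact (bh_below_left hr₂0 one_pos hδ₂ hA₂ hAK₂ huniq₂' u hu' huA).le
  -- key invariant
  have key : ∀ t, A₁a < x t ∧ 0 ≤ y t ∧ y t ≤ y 0 := by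
    intro t
    induction t with
    | zero => exact ⟨hx0, hy00, le_refl _⟩
    | succ t ih =>
      obtain ⟨hxt, hyt0, hyt⟩ := ih
      have hxt0 : 0 < x t := hA₁a.trans hxt
      have hYp : (0:ℝ) ≤ b₁ * (y t) ^ δ₃ := by
        have := Real.rpow_nonneg hyt0 δ₃; positivity
      have hY2 : (0:ℝ) ≤ (y t) ^ δ₂ := Real.rpow_nonneg hyt0 δ₂
      have hX4 : (0:ℝ) ≤ b₂ * (x t) ^ δ₄ := by
        have := Real.rpow_nonneg hxt0.le δ₄; positivity
      have hytA : y t < A₂ := lt_of_le_of_lt hyt hy0A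
      refine ⟨?_, ?_, ?_⟩
      · -- x (t+1) ≥ G₁ (x t) > A₁a
        have h1 : r₁ * (x t) ^ δ₁ / (a₁ + (x t) ^ δ₁) ≤ x (t+1) := by
          rw [hxf t, ha₁]
          have hd : b₁ * (y t) ^ δ₃ ≤ b₁ * A₂ ^ δ₃ :=
            mul_le_mul_of_nonneg_left
              (Real.rpow_le_rpow hyt0 hytA.le hδ₃.le) hb₁.le
          exact bh_ge_lower hr₁0.le (Real.rpow_nonneg hxt0.le δ₁) hYp hd
        have h2 : A₁a < r₁ * (x t) ^ δ₁ / (a₁ + (x t) ^ δ₁) := by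
          have h := bh_strict_mono hr₁0 ha₁0 hδ₁0 hA₁a hxt
          rw [← hG₁ A₁a, hfixA₁a] at h
          exact h
        linarith
      · rw [hyf t]; exact bh_nonneg hr₂0.le hY2 hX4
      · have h1 : y (t+1) ≤ r₂ * (y t) ^ δ₂ / (1 + (y t) ^ δ₂) := by
          rw [hyf t]; exact bh_le_noY hr₂0.le hY2 hX4
        have h2 := hH₂le (y t) hyt0 hytA
        linarith
  have hxpos : ∀ t, 0 < x t := fun t => hA₁a.trans (key t).1
  -- y is antitone and tends to 0
  have hy_succ : ∀ t, y (t+1) ≤ r₂ * (y t) ^ δ₂ / (1 + (y t) ^ δ₂) := by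
    intro t
    have hY2 : (0:ℝ) ≤ (y t) ^ δ₂ := Real.rpow_nonneg (key t).2.1 δ₂
    have hX4 : (0:ℝ) ≤ b₂ * (x t) ^ δ₄ := by
      have := Real.rpow_nonneg (hxpos t).le δ₄; positivity
    rw [hyf t]; exact bh_le_noY hr₂0.le hY2 hX4
  have hyanti : Antitone y := by
    apply antitone_nat_of_succ_le
    intro t
    have h2 := hH₂le (y t) (key t).2.1 (lt_of_le_of_lt (key t).2.2 hy0A)
    linarith [hy_succ t]
  have hybdd : BddBelow (Set.range y) := ⟨0, by rintro z ⟨t, rfl⟩; exact (key t).2.1⟩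
  have hylim : Tendsto y atTop (𝓝 (⨅ t, y t)) := tendsto_atTop_ciInf hyanti hybdd
  have hyL0 : (⨅ t, y t) = 0 := by
    set L := ⨅ t, y t with hL
    have hL0 : 0 ≤ L := le_ciInf fun t => (key t).2.1
    have hLy0 : L ≤ y 0 := ciInf_le hybdd 0
    by_contra hne
    have hLpos : 0 < L := lt_of_le_of_ne hL0 (Ne.symm hne)
    have hcont : ContinuousAt (fun u : ℝ => r₂ * u ^ δ₂ / (1 + u ^ δ₂)) L := by
      have h : ContinuousAt (fun t : ℝ => t ^ δ₂) L :=
        Real.continuousAt_rpow_const L δ₂ (Or.inl hLpos.ne')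
      have hden : 1 + L ^ δ₂ ≠ 0 := by
        have := Real.rpow_nonneg hLpos.le δ₂; positivity
      exact (continuousAt_const.mul h).div (continuousAt_const.add h) hden
    have h1 : Tendsto (fun t => y (t+1)) atTop (𝓝 L) :=
      hylim.comp (tendsto_add_atTop_nat 1)
    have h2 : Tendsto (fun t => r₂ * (y t) ^ δ₂ / (1 + (y t) ^ δ₂)) atTop
        (𝓝 (r₂ * L ^ δ₂ / (1 + L ^ δ₂))) := hcont.tendsto.comp hylim
    have h3 : L ≤ r₂ * L ^ δ₂ / (1 + L ^ δ₂) :=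
      le_of_tendsto_of_tendsto' h1 h2 hy_succ
    have h4 : r₂ * L ^ δ₂ / (1 + L ^ δ₂) < L :=
      bh_below_left hr₂0 one_pos hδ₂ hA₂ hAK₂ huniq₂' L hLpos
        (lt_of_le_of_lt hLy0 hy0A)
    linarith
  have hytendsto : Tendsto y atTop (𝓝 0) := hyL0 ▸ hylim
  -- A₁a is strictly between A₁ and K₁
  have hH₁A₁a : A₁a < r₁ * A₁a ^ δ₁ / (1 + A₁a ^ δ₁) := by
    have hfix : r₁ * A₁a ^ δ₁ / (a₁ + A₁a ^ δ₁) = A₁a := by rw [← hG₁]; exact hfixA₁a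
    have hXp : (0:ℝ) < A₁a ^ δ₁ := Real.rpow_pos_of_pos hA₁a δ₁
    calc A₁a = r₁ * A₁a ^ δ₁ / (a₁ + A₁a ^ δ₁) := hfix.symm
      _ < r₁ * A₁a ^ δ₁ / (1 + A₁a ^ δ₁) := by
          apply div_lt_div_of_pos_left (by positivity) (by linarith) (by linarith)
  have hA₁A₁a : A₁ < A₁a := by
    by_contra hcon
    push_neg at hcon
    rcases eq_or_lt_of_le hcon with heq | hlt
    · rw [heq] at hH₁A₁a
      rw [hH₁] at hfixA₁
      linarith
    · have := bh_below_left hr₁0 one_pos hδ₁ hA₁ hAK₁ huniq₁' A₁a hA₁a hlt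
      linarith
  have hA₁aK₁ : A₁a < K₁ := by
    by_contra hcon
    push_neg at hcon
    rcases eq_or_lt_of_le hcon with heq | hlt
    · rw [← heq] at hH₁A₁a
      rw [hH₁] at hfixK₁
      linarith
    · have := bh_above_right hr₁0 one_pos hδ₁ hA₁ hAK₁ huniq₁' A₁a hlt
      linarith
  have hK₁0 : 0 < K₁ := hA₁.trans hAK₁
  have hK₁r₁ : K₁ < r₁ := by
    have hfix : r₁ * K₁ ^ δ₁ / (1 + K₁ ^ δ₁) = K₁ := by rw [← hH₁]; exact hfixK₁
    exact bh_fix_lt_r (Real.rpow_pos_of_pos hK₁0 δ₁) hK₁0 hfix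
  -- upper comparison sequence h
  set Hmap : ℝ → ℝ := fun u => r₁ * u ^ δ₁ / (1 + u ^ δ₁) with hHmap
  set h : ℕ → ℝ := fun t => Hmap^[t] (max (x 0) K₁) with hhdef
  have hhsucc : ∀ t, h (t+1) = Hmap (h t) := by
    intro t
    simp only [hhdef, Function.iterate_succ_apply']
  have hhK : ∀ t, K₁ ≤ h t := by
    intro t
    induction t with
    | zero => exact le_max_right _ _
    | succ t ih =>
      rw [hhsucc t]
      have h2 := bh_mono hr₁0 one_pos hδ₁0 hK₁0.le ih
      have hfix : r₁ * K₁ ^ δ₁ / (1 + K₁ ^ δ₁) = K₁ := by rw [← hH₁]; exact hfixK₁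
      simpa [hHmap, hfix] using h2
  have hhx : ∀ t, x t ≤ h t := by
    intro t
    induction t with
    | zero => exact le_max_left _ _
    | succ t ih =>
      rw [hhsucc t]
      have h1 : x (t+1) ≤ r₁ * (x t) ^ δ₁ / (1 + (x t) ^ δ₁) := by
        rw [hxf t]
        have hY : (0:ℝ) ≤ b₁ * (y t) ^ δ₃ := by
          have := Real.rpow_nonneg (key t).2.1 δ₃; positivity
        exact bh_le_noY hr₁0.le (Real.rpow_nonneg (hxpos t).le δ₁) hY
      have h2 := bh_mono hr₁0 one_pos hδ₁0 (hxpos t).le ih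
      exact h1.trans h2
  have hhanti : Antitone h := by
    apply antitone_nat_of_succ_le
    intro t
    rw [hhsucc t]
    rcases eq_or_lt_of_le (hhK t) with heq | hlt
    · have hfix : r₁ * K₁ ^ δ₁ / (1 + K₁ ^ δ₁) = K₁ := by rw [← hH₁]; exact hfixK₁
      simp [hHmap, ← heq, hfix]
    · exact (bh_above_right hr₁0 one_pos hδ₁ hA₁ hAK₁ huniq₁' (h t) hlt).le
  have hhbdd : BddBelow (Set.range h) := ⟨K₁, by rintro z ⟨t, rfl⟩; exact hhK t⟩
  have hhlim : Tendsto h atTop (𝓝 (⨅ t, h t)) := tendsto_atTop_ciInf hhanti hhbdd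
  have hhL : (⨅ t, h t) = K₁ := by
    set L := ⨅ t, h t with hL
    have hLK : K₁ ≤ L := le_ciInf hhK
    have hLpos : 0 < L := hK₁0.trans_le hLK
    have hcont : ContinuousAt Hmap L := by
      have h1 : ContinuousAt (fun t : ℝ => t ^ δ₁) L :=
        Real.continuousAt_rpow_const L δ₁ (Or.inl hLpos.ne')
      have hden : 1 + L ^ δ₁ ≠ 0 := by
        have := Real.rpow_nonneg hLpos.le δ₁; positivity
      exact (continuousAt_const.mul h1).div (continuousAt_const.add h1) hden
    have h1 : Tendsto (fun t => h (t+1)) atTop (𝓝 L) :=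
      hhlim.comp (tendsto_add_atTop_nat 1)
    have h2 : Tendsto (fun t => Hmap (h t)) atTop (𝓝 (Hmap L)) :=
      hcont.tendsto.comp hhlim
    have h3 : Hmap L = L :=
      tendsto_nhds_unique (h2.congr fun t => (hhsucc t).symm) h1
    rcases huniq₁' L hLpos h3 with h' | h'
    · exfalso; rw [h'] at hLK; linarith
    · rw [h']
  have hhlimK : Tendsto h atTop (𝓝 K₁) := hhL ▸ hhlim
  -- x tends to K₁
  have hxtendsto : Tendsto x atTop (𝓝 K₁) := by
    rw [tendsto_order]
    constructor
    · -- lower bounds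
      intro c hc
      rcases le_or_gt c A₁a with hcA | hcA
      · exact Eventually.of_forall fun t => lt_of_le_of_lt hcA (key t).1
      · set d := (c + K₁)/2 with hd
        have hcd : c < d := by rw [hd]; linarith
        have hdK : d < K₁ := by rw [hd]; linarith
        have hA₁ad : A₁a < d := lt_trans hcA hcd
        have hcontf : ContinuousOn (fun u : ℝ => Hmap u - u) (Set.Icc A₁a d) := by
          intro t ht
          have ht0 : 0 < t := lt_of_lt_of_le hA₁a ht.1
          have h1 : ContinuousAt (fun t : ℝ => t ^ δ₁) t :=
            Real.continuousAt_rpow_const t δ₁ (Or.inl ht0.ne')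
          have hden : 1 + t ^ δ₁ ≠ 0 := by
            have := Real.rpow_nonneg ht0.le δ₁; positivity
          exact (((continuousAt_const.mul h1).div (continuousAt_const.add h1)
            hden).sub continuousAt_id).continuousWithinAt
        obtain ⟨z, hz, hzmin⟩ := isCompact_Icc.exists_isMinOn
          ⟨A₁a, le_refl A₁a, hA₁ad.le⟩ hcontf
        set μ := Hmap z - z with hμ
        have hμle : ∀ u ∈ Set.Icc A₁a d, μ ≤ Hmap u - u := fun u hu => hzmin hu
        have hμpos : 0 < μ := by
          have h1 := bh_above_middle hr₁0 one_pos hδ₁ hA₁ hAK₁ huniq₁' hA₁A₁a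
            hH₁A₁a z hz.1 (lt_of_le_of_lt hz.2 hdK)
          have h2 : Hmap z = r₁ * z ^ δ₁ / (1 + z ^ δ₁) := rfl
          rw [hμ, h2]; linarith
        have hHmap_le_r : ∀ u, 0 < u → Hmap u ≤ r₁ := fun u hu =>
          bh_le_r hr₁0 (Real.rpow_pos_of_pos hu δ₁)
        set η := min (μ/(2*(2*r₁+1))) (1/2) with hη
        have hηpos : 0 < η := lt_min (by positivity) (by norm_num)
        have hη1 : η < 1 := lt_of_le_of_lt (min_le_right _ _) (by norm_num)
        have hηr₁ : η * (2*r₁) ≤ μ := bh_eta_bound hμpos hr₁0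
        set τ := (η/b₁) ^ (1/δ₃) with hτ
        have hτpos : 0 < τ := Real.rpow_pos_of_pos (by positivity) _
        obtain ⟨N, hN⟩ := eventually_atTop.mp (hytendsto.eventually_lt_const hτpos)
        have hYbound : ∀ t, N ≤ t → b₁ * (y t) ^ δ₃ ≤ η := by
          intro t ht
          have h1 : y t < τ := hN t ht
          have h2 : (y t) ^ δ₃ ≤ τ ^ δ₃ := Real.rpow_le_rpow (key t).2.1 h1.le hδ₃.le
          have h3 : τ ^ δ₃ = η/b₁ := by
            rw [hτ, ← Real.rpow_mul (by positivity), one_div,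
              inv_mul_cancel₀ hδ₃.ne', Real.rpow_one]
          rw [h3] at h2
          rw [← le_div_iff₀' hb₁]
          exact h2
        have hstep' : ∀ t, N ≤ t → (1 - η) * Hmap (x t) ≤ x (t+1) := by
          intro t ht
          rw [hxf t]
          have hY : (0:ℝ) ≤ b₁ * (y t) ^ δ₃ := by
            have := Real.rpow_nonneg (key t).2.1 δ₃; positivity
          exact bh_step_est hr₁0 (Real.rpow_pos_of_pos (hxpos t) δ₁) hY
            (hYbound t ht) hηpos
        have hup : ∀ t, N ≤ t → x t ≤ d → x t + μ/2 ≤ x (t+1) := by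
          intro t ht hxd
          have h1 := hstep' t ht
          have h2 : μ ≤ Hmap (x t) - x t := hμle (x t) ⟨(key t).1.le, hxd⟩
          have h3 : Hmap (x t) ≤ r₁ := hHmap_le_r (x t) (hxpos t)
          have h4 : (1 - η) * Hmap (x t) = Hmap (x t) - η * Hmap (x t) := by ring
          have h5 : η * Hmap (x t) ≤ η * r₁ :=
            mul_le_mul_of_nonneg_left h3 hηpos.le
          linarith
        have htrap : ∀ t, N ≤ t → d ≤ x t → d ≤ x (t+1) := by
          intro t ht hdx
          have h1 := hstep' t ht
          have h2 : Hmap d ≤ Hmap (x t) :=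
            bh_mono hr₁0 one_pos hδ₁0 (hA₁a.trans hA₁ad).le hdx
          have h3 : d + μ ≤ Hmap d := by
            have := hμle d ⟨hA₁ad.le, le_refl d⟩
            linarith
          have h4 : η * (d + μ) ≤ μ := by
            have hμr₁ : μ ≤ r₁ := by
              have := hHmap_le_r z (hA₁a.trans_le hz.1)
              have hz0 : 0 ≤ z := (hA₁a.trans_le hz.1).le
              rw [hμ]; linarith
            have hd2r : d + μ ≤ 2*r₁ := by linarith
            have h6 : η * (d + μ) ≤ η * (2*r₁) :=
              mul_le_mul_of_nonneg_left hd2r hηpos.le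
            linarith
          have h5 : (1-η) * (d + μ) ≤ (1-η) * Hmap (x t) :=
            mul_le_mul_of_nonneg_left (h3.trans h2) (by linarith)
          have h7 : (1-η) * (d + μ) = d + μ - η * (d + μ) := by ring
          linarith
        have hreach : ∃ t₀, N ≤ t₀ ∧ d ≤ x t₀ := by
          by_contra hcon
          push_neg at hcon
          have hgrow : ∀ k : ℕ, x N + k * (μ/2) ≤ x (N + k) := by
            intro k
            induction k with
            | zero => simp
            | succ k ih =>
              have h1 : x (N+k) < d := hcon (N+k) (Nat.le_add_right N k)
              have h2 := hup (N+k) (Nat.le_add_right N k) h1.le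
              have h3 : N + (k+1) = (N + k) + 1 := by ring
              rw [h3]
              push_cast
              push_cast at ih
              linarith
          obtain ⟨k, hk⟩ := exists_nat_gt ((d - x N)/(μ/2))
          have h1 : d - x N < k * (μ/2) := by
            rw [div_lt_iff₀ (by linarith)] at hk
            linarith
          have h2 := hgrow k
          have h3 := hcon (N+k) (Nat.le_add_right N k)
          linarith
        obtain ⟨t₀, ht₀N, ht₀d⟩ := hreach
        rw [eventually_atTop]
        refine ⟨t₀, fun t ht => ?_⟩
        have hdx : d ≤ x t := by
          induction t, ht using Nat.le_induction with
          | base => exact ht₀d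
          | succ t ht ih => exact htrap t (le_trans ht₀N ht) ih
        linarith
    · -- upper bounds
      intro c hc
      filter_upwards [hhlimK.eventually_lt_const hc] with t ht
      exact lt_of_le_of_lt (hhx t) ht
  exact hxtendsto.prodMk_nhds hytendsto
end

section
/- Assume Condition H1: δ₁ > 1, δ₂ > 1, r₁ > δ₁(δ₁−1)^{(1/δ₁)−1} and r₂ > δ₂(δ₂−1)^{(1/δ₂)−1}, and let Aᵢ < Kᵢ be the two positive fixed points of Hᵢ(u) = rᵢu^{δᵢ}/(1+u^{δᵢ}) for i = 1,2. Set x_c = r₁(δ₁−1)/δ₁, y_c = r₂(δ₂−1)/δ₂, F₁(x) = ((r₁x^{δ₁−1}−x^{δ₁}−1)/b₁)^{1/δ₃} and F₂(y) = ((r₂y^{δ₂−1}−y^{δ₂}−1)/b₂)^{1/δ₄}. If F₁(x_c) < A₂ or F₂(y_c) < A₁, then the competition map T has no fixed point in the open positive quadrant (0,∞)². -/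
/-!
At a coexistence fixed point `(x, y)` the first equation reads
`b₁ y^δ₃ = r₁ x^(δ₁-1) - x^δ₁ - 1`. By Young's inequality the right-hand side is
maximal at `x = x_c`, so `y ≤ F₁(x_c) < A₂`. The second equation gives
`r₂ y^(δ₂-1) - y^δ₂ - 1 > 0`, i.e. `H₂ y > y`; since this excess tends to `-1` at `0`,
the intermediate value theorem produces a positive fixed point of `H₂` below `y < A₂`,
which is impossible. The other case is symmetric.
-/

open Real Set Filter Topology

noncomputable def growthExcess (r δ x : ℝ) : ℝ := r * x ^ (δ - 1) - x ^ δ - 1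

theorem rpow_sub_one_mul_self {x : ℝ} (hx : 0 < x) (δ : ℝ) : x ^ (δ - 1) * x = x ^ δ := by
  rw [rpow_sub_one hx.ne', div_mul_cancel₀ _ hx.ne']

theorem div_one_add_rpow_add_eq_self_iff {r δ x D : ℝ} (hx : 0 < x) (hD : 0 ≤ D) :
    r * x ^ δ / (1 + x ^ δ + D) = x ↔ growthExcess r δ x = D := by
  have key : r * x ^ δ - x * (1 + x ^ δ + D) = x * (growthExcess r δ x - D) := by
    rw [growthExcess, ← rpow_sub_one_mul_self hx δ]; ring
  have hden : 1 + x ^ δ + D ≠ 0 := by have := rpow_pos_of_pos hx δ; positivity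
  rw [div_eq_iff hden, ← sub_eq_zero, key, mul_eq_zero, or_iff_right hx.ne', sub_eq_zero]

theorem growthExcess_le_growthExcess_critical {r δ x : ℝ} (hδ : 1 < δ) (hr : 0 < r)
    (hx : 0 ≤ x) :
    growthExcess r δ x ≤ growthExcess r δ (r * (δ - 1) / δ) := by
  obtain ⟨c, hc_def⟩ : ∃ c, c = r * (δ - 1) / δ := ⟨_, rfl⟩
  rw [← hc_def]
  have hδ1 : 0 < δ - 1 := by linarith
  have hc : 0 < c := by rw [hc_def]; positivity
  have hδc : δ * c = r * (δ - 1) := by rw [hc_def]; field_simp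
  have young := young_inequality_of_nonneg (rpow_nonneg hx (δ - 1)) hc.le
    (HolderConjugate.conjExponent hδ).symm
  rw [conjExponent, ← rpow_mul hx, mul_div_cancel₀ _ hδ1.ne'] at young
  field_simp at young
  -- `young : δ * x ^ (δ - 1) * c ≤ (δ - 1) * x ^ δ + c ^ δ`
  have hcδ := rpow_sub_one_mul_self hc δ
  refine le_of_mul_le_mul_left ?_ hδ1
  calc (δ - 1) * growthExcess r δ x ≤ c ^ δ - (δ - 1) := by
        unfold growthExcess; linear_combination young - x ^ (δ - 1) * hδc
    _ = (δ - 1) * growthExcess r δ c := by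
        unfold growthExcess; linear_combination c ^ (δ - 1) * hδc - δ * hcδ

theorem exists_growthExcess_eq_zero {s ε y : ℝ} (hε : 1 < ε) (hy : 0 < y)
    (hpos : 0 < growthExcess s ε y) : ∃ z ∈ Ioo 0 y, growthExcess s ε z = 0 := by
  have hcont : Continuous (growthExcess s ε) := by
    have h1 := continuous_rpow_const (by linarith : (0:ℝ) ≤ ε - 1)
    have h2 := continuous_rpow_const (by linarith : (0:ℝ) ≤ ε)
    unfold growthExcess
    fun_prop
  have hzero : growthExcess s ε 0 < 0 := by
    simp [growthExcess, zero_rpow (by linarith : ε - 1 ≠ 0), zero_rpow (by linarith : ε ≠ 0)]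
  have hneg : ∀ᶠ u in 𝓝[>] 0, growthExcess s ε u < 0 :=
    nhdsWithin_le_nhds ((hcont.tendsto 0).eventually (gt_mem_nhds hzero))
  obtain ⟨u, hu_neg, hu⟩ := (hneg.and (Ioo_mem_nhdsGT hy)).exists
  obtain ⟨z, hz, hz0⟩ := intermediate_value_Ioo hu.2.le hcont.continuousOn ⟨hu_neg, hpos⟩
  exact ⟨z, ⟨hu.1.trans hz.1, hz.2⟩, hz0⟩

theorem growthExcess_neg_of_lt {s ε A y : ℝ} (hε : 1 < ε)
    (hA : ∀ u, 0 < u → growthExcess s ε u = 0 → A ≤ u) (hy : 0 < y) (hyA : y < A) :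
    growthExcess s ε y < 0 := by
  by_contra! h
  rcases h.eq_or_lt with h0 | hpos
  · exact (hA y hy h0.symm).not_gt hyA
  · obtain ⟨z, hz, hz0⟩ := exists_growthExcess_eq_zero hε hy hpos
    exact (hA z hz.1 hz0).not_gt (hz.2.trans hyA)

theorem not_coexistence_of_critical_lt {r δ b δ' s ε b' ε' A K x y : ℝ}
    (hδ : 1 < δ) (hb : 0 < b) (hδ' : 0 < δ') (hε : 1 < ε) (hb' : 0 ≤ b') (hAK : A < K)
    (hfix : ∀ u, 0 < u → s * u ^ ε / (1 + u ^ ε) = u → u = A ∨ u = K)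
    (hcrit : (growthExcess r δ (r * (δ - 1) / δ) / b) ^ (1 / δ') < A)
    (hx : 0 < x) (hy : 0 < y)
    (h₁ : r * x ^ δ / (1 + x ^ δ + b * y ^ δ') = x)
    (h₂ : s * y ^ ε / (1 + y ^ ε + b' * x ^ ε') = y) : False := by
  have hyδ' : 0 < b * y ^ δ' := mul_pos hb (rpow_pos_of_pos hy δ')
  rw [div_one_add_rpow_add_eq_self_iff hx hyδ'.le] at h₁
  rw [div_one_add_rpow_add_eq_self_iff hy (by positivity)] at h₂
  have hr : 0 < r := by
    have : 0 < r * x ^ (δ - 1) := by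
      unfold growthExcess at h₁; linarith [rpow_pos_of_pos hx δ]
    exact pos_of_mul_pos_left this (rpow_nonneg hx.le _)
  have hbound : b * y ^ δ' ≤ growthExcess r δ (r * (δ - 1) / δ) :=
    h₁ ▸ growthExcess_le_growthExcess_critical hδ hr hx.le
  have hyA : y < A := by
    refine lt_of_le_of_lt ?_ hcrit
    rw [one_div, le_rpow_inv_iff_of_pos hy.le (div_nonneg (hyδ'.le.trans hbound) hb.le) hδ',
      le_div_iff₀ hb, mul_comm]
    exact hbound
  have hzeros : ∀ u, 0 < u → growthExcess s ε u = 0 → A ≤ u := by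
    intro u hu h0
    have hHu := (div_one_add_rpow_add_eq_self_iff (r := s) (δ := ε) hu le_rfl).2 h0
    rcases hfix u hu (by rwa [add_zero] at hHu) with rfl | rfl
    exacts [le_rfl, hAK.le]
  exact (growthExcess_neg_of_lt hε hzeros hy hyA).not_ge (h₂ ▸ by positivity)

theorem stmt_17_general (r₁ r₂ b₁ b₂ δ₁ δ₂ δ₃ δ₄ : ℝ)
    (hb₁ : 0 < b₁) (hb₂ : 0 < b₂) (hδ₃ : 0 < δ₃) (hδ₄ : 0 < δ₄)
    (hδ₁ : 1 < δ₁) (hδ₂ : 1 < δ₂)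
    (H₁ H₂ : ℝ → ℝ)
    (hH₁ : ∀ u : ℝ, H₁ u = r₁ * u ^ δ₁ / (1 + u ^ δ₁))
    (hH₂ : ∀ u : ℝ, H₂ u = r₂ * u ^ δ₂ / (1 + u ^ δ₂))
    (A₁ K₁ A₂ K₂ : ℝ)
    (hAK₁ : A₁ < K₁)
    (huniq₁ : ∀ u : ℝ, 0 < u → H₁ u = u → u = A₁ ∨ u = K₁)
    (hAK₂ : A₂ < K₂)
    (huniq₂ : ∀ u : ℝ, 0 < u → H₂ u = u → u = A₂ ∨ u = K₂)
    (x_c y_c : ℝ)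
    (hx_c : x_c = r₁ * (δ₁ - 1) / δ₁) (hy_c : y_c = r₂ * (δ₂ - 1) / δ₂)
    (F₁ F₂ : ℝ → ℝ)
    (hF₁ : ∀ x : ℝ, F₁ x = ((r₁ * x ^ (δ₁ - 1) - x ^ δ₁ - 1) / b₁) ^ (1 / δ₃))
    (hF₂ : ∀ y : ℝ, F₂ y = ((r₂ * y ^ (δ₂ - 1) - y ^ δ₂ - 1) / b₂) ^ (1 / δ₄))
    (hcond : F₁ x_c < A₂ ∨ F₂ y_c < A₁)
    (T : ℝ × ℝ → ℝ × ℝ)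
    (hT : ∀ x y : ℝ, T (x, y) =
      (r₁ * x ^ δ₁ / (1 + x ^ δ₁ + b₁ * y ^ δ₃),
       r₂ * y ^ δ₂ / (1 + y ^ δ₂ + b₂ * x ^ δ₄))) :
    ∀ p : ℝ × ℝ, 0 < p.1 → 0 < p.2 → T p ≠ p := by
  rintro ⟨x, y⟩ hx hy hfix
  rw [hT, Prod.mk.injEq] at hfix
  rcases hcond with hc | hc
  · rw [hF₁, hx_c] at hc
    exact not_coexistence_of_critical_lt hδ₁ hb₁ hδ₃ hδ₂ hb₂.le hAK₂
      (fun u hu h => huniq₂ u hu ((hH₂ u).trans h)) hc hx hy hfix.1 hfix.2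
  · rw [hF₂, hy_c] at hc
    exact not_coexistence_of_critical_lt hδ₂ hb₂ hδ₄ hδ₁ hb₁.le hAK₁
      (fun u hu h => huniq₁ u hu ((hH₁ u).trans h)) hc hy hx hfix.2 hfix.1

/-- Under Condition H1, if `F₁(x_c) < A₂` or `F₂(y_c) < A₁`, then the
competition map `T` has no fixed point in the open positive quadrant. -/
theorem stmt_17 (r₁ r₂ b₁ b₂ δ₁ δ₂ δ₃ δ₄ : ℝ)
    (hb₁ : 0 < b₁) (hb₂ : 0 < b₂) (hδ₃ : 0 < δ₃) (hδ₄ : 0 < δ₄)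
    (hδ₁ : 1 < δ₁) (hδ₂ : 1 < δ₂)
    (hr₁ : r₁ > δ₁ * (δ₁ - 1) ^ (1 / δ₁ - 1))
    (hr₂ : r₂ > δ₂ * (δ₂ - 1) ^ (1 / δ₂ - 1))
    (H₁ H₂ : ℝ → ℝ)
    (hH₁ : ∀ u : ℝ, H₁ u = r₁ * u ^ δ₁ / (1 + u ^ δ₁))
    (hH₂ : ∀ u : ℝ, H₂ u = r₂ * u ^ δ₂ / (1 + u ^ δ₂))
    (A₁ K₁ A₂ K₂ : ℝ)
    (hA₁ : 0 < A₁) (hAK₁ : A₁ < K₁)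
    (hfixA₁ : H₁ A₁ = A₁) (hfixK₁ : H₁ K₁ = K₁)
    (huniq₁ : ∀ u : ℝ, 0 < u → H₁ u = u → u = A₁ ∨ u = K₁)
    (hA₂ : 0 < A₂) (hAK₂ : A₂ < K₂)
    (hfixA₂ : H₂ A₂ = A₂) (hfixK₂ : H₂ K₂ = K₂)
    (huniq₂ : ∀ u : ℝ, 0 < u → H₂ u = u → u = A₂ ∨ u = K₂)
    (x_c y_c : ℝ)
    (hx_c : x_c = r₁ * (δ₁ - 1) / δ₁) (hy_c : y_c = r₂ * (δ₂ - 1) / δ₂)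
    (F₁ F₂ : ℝ → ℝ)
    (hF₁ : ∀ x : ℝ, F₁ x = ((r₁ * x ^ (δ₁ - 1) - x ^ δ₁ - 1) / b₁) ^ (1 / δ₃))
    (hF₂ : ∀ y : ℝ, F₂ y = ((r₂ * y ^ (δ₂ - 1) - y ^ δ₂ - 1) / b₂) ^ (1 / δ₄))
    (hcond : F₁ x_c < A₂ ∨ F₂ y_c < A₁)
    (T : ℝ × ℝ → ℝ × ℝ)
    (hT : ∀ x y : ℝ, T (x, y) =
      (r₁ * x ^ δ₁ / (1 + x ^ δ₁ + b₁ * y ^ δ₃),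
       r₂ * y ^ δ₂ / (1 + y ^ δ₂ + b₂ * x ^ δ₄))) :
    ∀ p : ℝ × ℝ, 0 < p.1 → 0 < p.2 → T p ≠ p :=
  stmt_17_general r₁ r₂ b₁ b₂ δ₁ δ₂ δ₃ δ₄ hb₁ hb₂ hδ₃ hδ₄ hδ₁ hδ₂ H₁ H₂ hH₁ hH₂ A₁ K₁ A₂ K₂ hAK₁
    huniq₁ hAK₂ huniq₂ x_c y_c hx_c hy_c F₁ F₂ hF₁ hF₂ hcond T hT
end

section
/- Let r, b, δ, d > 0 and let x* > 0 satisfy r·(x*)^{δ−1} = 1 + (x*)^δ + b·(x*)^d (so (x*,x*) is a fixed point of the symmetric competition map G(x,y) = (r·x^δ/(1+x^δ+b·y^d), r·y^δ/(1+y^δ+b·x^d))). Then, with D = 1 + (x*)^δ + b·(x*)^d, the Jacobian matrix of G at (x*,x*) equals the 2×2 matrix with diagonal entries δ(1+b(x*)^d)/D and off-diagonal entries −b·d·(x*)^d/D, and its eigenvalues are λ₁ = (δ + b(δ−d)(x*)^d)/D and λ₂ = (δ + b(δ+d)(x*)^d)/D. In particular, both eigenvalues have absolute value less than 1 if and only if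 |δ + b(δ−d)(x*)^d| < D and δ + b(δ+d)(x*)^d < D. -/
/-!
Each partial derivative of `G` at `(x, x)` is a quotient-rule expression that collapses once the
fixed-point relation `r x^(δ-1) = D` (equivalently `r x^δ = x D`) is substituted. The Jacobian then
has the shape `!![p, q; q, p]`, whose eigenvectors are `(1, 1)` and `(1, -1)` with eigenvalues
`p + q` and `p - q`. Since `λ₂ > 0`, the condition `|λ₂| < 1` reduces to `λ₂ < 1`.
-/

section BevertonHolt

variable {a b c k r δ d x : ℝ}

theorem hasDerivAt_mul_rpow_div_one_add_rpow_add (hx : x ≠ 0)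
    (hfix : r * x ^ (δ - 1) = 1 + x ^ δ + c) (hD : 1 + x ^ δ + c ≠ 0) :
    HasDerivAt (fun u : ℝ => r * u ^ δ / (1 + u ^ δ + c))
      (δ * (1 + c) / (1 + x ^ δ + c)) x := by
  have hpow : HasDerivAt (fun u : ℝ => u ^ δ) (δ * x ^ (δ - 1)) x :=
    Real.hasDerivAt_rpow_const (Or.inl hx)
  have hden : HasDerivAt (fun u : ℝ => 1 + u ^ δ + c) (δ * x ^ (δ - 1)) x := by
    simpa using (hpow.const_add 1).add_const c
  refine ((hpow.const_mul r).div hden hD).congr_deriv ?_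
  rw [div_eq_div_iff (pow_ne_zero 2 hD) hD]
  linear_combination δ * (1 + x ^ δ + c) * (1 + c) * hfix

theorem hasDerivAt_div_add_mul_rpow (hx : x ≠ 0) (ha : a = x * (k + b * x ^ d))
    (hD : k + b * x ^ d ≠ 0) :
    HasDerivAt (fun v : ℝ => a / (k + b * v ^ d)) (-(b * d * x ^ d) / (k + b * x ^ d)) x := by
  have hden : HasDerivAt (fun v : ℝ => k + b * v ^ d) (b * (d * x ^ (d - 1))) x :=
    ((Real.hasDerivAt_rpow_const (Or.inl hx)).const_mul b).const_add k
  refine ((hasDerivAt_const x a).div hden hD).congr_deriv ?_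
  rw [Real.rpow_sub_one hx, ha]
  field_simp
  ring

end BevertonHolt

open Matrix

theorem Matrix.symm_two_mulVec_one_one {R : Type*} [CommRing R] (p q : R) :
    !![p, q; q, p] *ᵥ ![1, 1] = (p + q) • ![1, 1] := by
  ext i; fin_cases i <;> simp [mulVec_cons, add_comm]

theorem Matrix.symm_two_mulVec_one_neg_one {R : Type*} [CommRing R] (p q : R) :
    !![p, q; q, p] *ᵥ ![1, -1] = (p - q) • ![1, -1] := by
  ext i; fin_cases i <;> simp [mulVec_cons, sub_eq_add_neg]

theorem stmt_19_general (r b δ d : ℝ) (hb : 0 < b) (hδ : 0 < δ)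
    (hd : 0 < d) (x : ℝ) (hx : 0 < x)
    (hfix : r * x ^ (δ - 1) = 1 + x ^ δ + b * x ^ d)
    (G : ℝ × ℝ → ℝ × ℝ)
    (hG : ∀ u v : ℝ, G (u, v) =
      (r * u ^ δ / (1 + u ^ δ + b * v ^ d),
       r * v ^ δ / (1 + v ^ δ + b * u ^ d)))
    (D : ℝ) (hD : D = 1 + x ^ δ + b * x ^ d)
    (J : Matrix (Fin 2) (Fin 2) ℝ)
    (hJ : J = !![δ * (1 + b * x ^ d) / D, -(b * d * x ^ d) / D;
                 -(b * d * x ^ d) / D, δ * (1 + b * x ^ d) / D])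
    (lam₁ lam₂ : ℝ)
    (hlam₁ : lam₁ = (δ + b * (δ - d) * x ^ d) / D)
    (hlam₂ : lam₂ = (δ + b * (δ + d) * x ^ d) / D) :
    HasDerivAt (fun u : ℝ => (G (u, x)).1) (δ * (1 + b * x ^ d) / D) x ∧
    HasDerivAt (fun v : ℝ => (G (x, v)).1) (-(b * d * x ^ d) / D) x ∧
    HasDerivAt (fun u : ℝ => (G (u, x)).2) (-(b * d * x ^ d) / D) x ∧
    HasDerivAt (fun v : ℝ => (G (x, v)).2) (δ * (1 + b * x ^ d) / D) x ∧
    J.mulVec ![1, 1] = lam₁ • ![1, 1] ∧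
    J.mulVec ![1, -1] = lam₂ • ![1, -1] ∧
    ((|lam₁| < 1 ∧ |lam₂| < 1) ↔
      (|δ + b * (δ - d) * x ^ d| < D ∧ δ + b * (δ + d) * x ^ d < D)) := by
  have hD0 : 0 < D := hD ▸ by positivity
  have hown := hasDerivAt_mul_rpow_div_one_add_rpow_add hx.ne' hfix (hD ▸ hD0.ne')
  have hcross := hasDerivAt_div_add_mul_rpow (a := r * x ^ δ) (k := 1 + x ^ δ) hx.ne'
    (by rw [← hfix, Real.rpow_sub_one hx.ne']; field_simp) (hD ▸ hD0.ne')
  rw [← hD] at hown hcross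
  simp only [hG]
  refine ⟨hown, hcross, hcross, hown, ?_, ?_, ?_⟩
  · rw [hJ, symm_two_mulVec_one_one, hlam₁]
    congr 1
    ring
  · rw [hJ, symm_two_mulVec_one_neg_one, hlam₂]
    congr 1
    ring
  · have hlam₂_pos : 0 < lam₂ := hlam₂ ▸ by positivity
    rw [abs_of_pos hlam₂_pos, hlam₁, hlam₂, abs_div, abs_of_pos hD0, div_lt_one hD0,
      div_lt_one hD0]

/-- At a symmetric interior equilibrium `(x, x)` of the symmetric competition
map `G`, the Jacobian matrix equals `!![δ(1+b x^d)/D, -b d x^d/D; -b d x^d/D,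
δ(1+b x^d)/D]` (stated via the four partial derivatives), its eigenvalues are
`λ₁ = (δ + b(δ-d)x^d)/D` and `λ₂ = (δ + b(δ+d)x^d)/D`, and both eigenvalues
have absolute value less than `1` iff `|δ + b(δ-d)x^d| < D` and
`δ + b(δ+d)x^d < D`. -/
theorem stmt_19 (r b δ d : ℝ) (hr : 0 < r) (hb : 0 < b) (hδ : 0 < δ)
    (hd : 0 < d) (x : ℝ) (hx : 0 < x)
    (hfix : r * x ^ (δ - 1) = 1 + x ^ δ + b * x ^ d)
    (G : ℝ × ℝ → ℝ × ℝ)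
    (hG : ∀ u v : ℝ, G (u, v) =
      (r * u ^ δ / (1 + u ^ δ + b * v ^ d),
       r * v ^ δ / (1 + v ^ δ + b * u ^ d)))
    (D : ℝ) (hD : D = 1 + x ^ δ + b * x ^ d)
    (J : Matrix (Fin 2) (Fin 2) ℝ)
    (hJ : J = !![δ * (1 + b * x ^ d) / D, -(b * d * x ^ d) / D;
                 -(b * d * x ^ d) / D, δ * (1 + b * x ^ d) / D])
    (lam₁ lam₂ : ℝ)
    (hlam₁ : lam₁ = (δ + b * (δ - d) * x ^ d) / D)
    (hlam₂ : lam₂ = (δ + b * (δ + d) * x ^ d) / D) :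
    HasDerivAt (fun u : ℝ => (G (u, x)).1) (δ * (1 + b * x ^ d) / D) x ∧
    HasDerivAt (fun v : ℝ => (G (x, v)).1) (-(b * d * x ^ d) / D) x ∧
    HasDerivAt (fun u : ℝ => (G (u, x)).2) (-(b * d * x ^ d) / D) x ∧
    HasDerivAt (fun v : ℝ => (G (x, v)).2) (δ * (1 + b * x ^ d) / D) x ∧
    J.mulVec ![1, 1] = lam₁ • ![1, 1] ∧
    J.mulVec ![1, -1] = lam₂ • ![1, -1] ∧
    ((|lam₁| < 1 ∧ |lam₂| < 1) ↔
      (|δ + b * (δ - d) * x ^ d| < D ∧ δ + b * (δ + d) * x ^ d < D)) :=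
  stmt_19_general r b δ d hb hδ hd x hx hfix G hG D hD J hJ lam₁ lam₂ hlam₁ hlam₂
end
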